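/- arXiv:1112.1151 — 6 statements merged into one kernel-verified Lean document; each statement's English description precedes it below -/
import Mathlib

section
/- For every integer i ≥ 0, a_{i+1} - a_i = ∫₀^∞ (1/(1+e^t)²)·( t^{2i+1}/(2i+1)! + t^{2i}/(2i)! ) dt, where a_0 = 1/2 (the value of (1-2^{1-2i})ζ(2i) at i = 0 interpreted as 1/2). -/
open MeasureTheory Real Filter

section helpers
open Set

lemma int_pow_exp (m : ℕ) {c : ℝ} (hc : 0 < c) :
    ∫ t in Set.Ioi (0:ℝ), t ^ m * Real.exp (-(c * t)) = (m.factorial : ℝ) / c ^ (m + 1) := by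
  have h := integral_rpow_mul_exp_neg_mul_Ioi (a := (m : ℝ) + 1) (r := c)
    (by positivity) hc
  rw [setIntegral_congr_fun measurableSet_Ioi
    (fun t (ht : 0 < t) => by
      rw [show ((m:ℝ) + 1 - 1) = (m:ℝ) by ring, Real.rpow_natCast]) ] at h
  rw [h, Real.Gamma_nat_eq_factorial,
    show ((m:ℝ) + 1) = ((m+1 : ℕ) : ℝ) by push_cast; ring, Real.rpow_natCast]
  rw [one_div, inv_pow, inv_mul_eq_div]

lemma integ_pow_exp (m : ℕ) {c : ℝ} (hc : 0 < c) :
    IntegrableOn (fun t : ℝ => t ^ m * Real.exp (-(c * t))) (Set.Ioi 0) := by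
  have h := integrableOn_rpow_mul_exp_neg_mul_rpow (p := 1) (s := (m:ℝ)) (b := c)
    (by linarith [Nat.cast_nonneg (α:=ℝ) m]) one_pos hc
  apply h.congr_fun (fun t (ht : 0 < t) => by
    rw [Real.rpow_natCast, Real.rpow_one, neg_mul]) measurableSet_Ioi

lemma one_add_exp_pos (t : ℝ) : 0 < 1 + Real.exp t := by positivity

lemma cont_f1 (m : ℕ) : Continuous (fun t : ℝ => t ^ m / (1 + Real.exp t)) := by
  exact (continuous_pow m).div (continuous_const.add Real.continuous_exp)
    (fun t => (one_add_exp_pos t).ne')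

lemma cont_f2 (m : ℕ) :
    Continuous (fun t : ℝ => t ^ m * Real.exp t / (1 + Real.exp t) ^ 2) := by
  exact ((continuous_pow m).mul Real.continuous_exp).div
    ((continuous_const.add Real.continuous_exp).pow 2)
    (fun t => by positivity)

lemma f1_bound {m : ℕ} {t : ℝ} (ht : 0 < t) :
    ‖t ^ m / (1 + Real.exp t)‖ ≤ t ^ m * Real.exp (-(1 * t)) := by
  rw [Real.norm_of_nonneg (by positivity), one_mul, Real.exp_neg, div_eq_mul_inv]
  gcongr
  exact le_add_of_nonneg_left zero_le_one

lemma f2_bound {m : ℕ} {t : ℝ} (ht : 0 < t) :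
    ‖t ^ m * Real.exp t / (1 + Real.exp t) ^ 2‖ ≤ t ^ m * Real.exp (-(1 * t)) := by
  rw [Real.norm_of_nonneg (by positivity), one_mul, Real.exp_neg]
  rw [div_le_iff₀ (by positivity)]
  have h1 : Real.exp t ^ 2 ≤ (1 + Real.exp t) ^ 2 := by
    have : Real.exp t ≤ 1 + Real.exp t := le_add_of_nonneg_left zero_le_one
    gcongr
  calc t ^ m * Real.exp t = t ^ m * (Real.exp t)⁻¹ * Real.exp t ^ 2 := by
        field_simp
    _ ≤ t ^ m * (Real.exp t)⁻¹ * (1 + Real.exp t) ^ 2 := by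
        have hp : (0:ℝ) ≤ t ^ m * (Real.exp t)⁻¹ := by positivity
        exact mul_le_mul_of_nonneg_left h1 hp

lemma integ_f1 (m : ℕ) :
    IntegrableOn (fun t : ℝ => t ^ m / (1 + Real.exp t)) (Set.Ioi 0) := by
  refine Integrable.mono' (integ_pow_exp m one_pos) ((cont_f1 m).aestronglyMeasurable.restrict) ?_
  rw [ae_restrict_iff' measurableSet_Ioi]
  exact Eventually.of_forall (fun t ht => f1_bound ht)

lemma integ_f2 (m : ℕ) :
    IntegrableOn (fun t : ℝ => t ^ m * Real.exp t / (1 + Real.exp t) ^ 2) (Set.Ioi 0) := by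
  refine Integrable.mono' (integ_pow_exp m one_pos) ((cont_f2 m).aestronglyMeasurable.restrict) ?_
  rw [ae_restrict_iff' measurableSet_Ioi]
  exact Eventually.of_forall (fun t ht => f2_bound ht)

lemma summable_aux (k : ℕ) (hk : 2 ≤ k) :
    Summable (fun n : ℕ => 1 / ((n : ℝ) + 1) ^ k) := by
  have h : Summable (fun n : ℕ => 1 / ((n : ℝ)) ^ k) :=
    summable_one_div_nat_pow.mpr (by omega)
  have h2 := (summable_nat_add_iff (f := fun n : ℕ => 1 / ((n : ℝ)) ^ k) 1).mpr h
  refine h2.congr (fun n => ?_)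
  push_cast
  ring

lemma F_eq (m : ℕ) (hm : 1 ≤ m) :
    ∫ t in Set.Ioi (0:ℝ), t ^ m / (1 + Real.exp t)
      = (m.factorial : ℝ) * ∑' n : ℕ, (-1 : ℝ) ^ n / ((n:ℝ) + 1) ^ (m + 1) := by
  set μ := volume.restrict (Set.Ioi (0:ℝ))
  set F : ℕ → ℝ → ℝ := fun n t => (-1 : ℝ) ^ n * (t ^ m * Real.exp (-(((n:ℝ) + 1) * t)))
  have hpos : ∀ n : ℕ, (0:ℝ) < (n:ℝ) + 1 := fun n => by positivity
  have hint : ∀ n : ℕ, Integrable (F n) μ :=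
    fun n => ((integ_pow_exp m (hpos n)).const_mul _)
  have hnormval : ∀ n : ℕ, ∫ t, ‖F n t‖ ∂μ = (m.factorial : ℝ) / ((n:ℝ) + 1) ^ (m + 1) := by
    intro n
    have : ∀ t ∈ Set.Ioi (0:ℝ), ‖F n t‖ = t ^ m * Real.exp (-(((n:ℝ) + 1) * t)) := by
      intro t ht
      simp only [F, norm_mul, norm_pow, norm_neg, norm_one, one_pow, one_mul]
      rw [Real.norm_of_nonneg (le_of_lt (Set.mem_Ioi.mp ht)),
        Real.norm_of_nonneg (Real.exp_nonneg _)]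
    rw [setIntegral_congr_fun measurableSet_Ioi this, int_pow_exp m (hpos n)]
  have hsum : Summable (fun n : ℕ => ∫ t, ‖F n t‖ ∂μ) := by
    rw [show (fun n : ℕ => ∫ t, ‖F n t‖ ∂μ)
        = fun n : ℕ => (m.factorial : ℝ) * (1 / ((n:ℝ) + 1) ^ (m + 1)) from
      funext fun n => by rw [hnormval n]; ring]
    exact (summable_aux (m+1) (by omega)).mul_left _
  have key := integral_tsum_of_summable_integral_norm hint hsum
  have hptw : ∀ t ∈ Set.Ioi (0:ℝ), (∑' n : ℕ, F n t) = t ^ m / (1 + Real.exp t) := by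
    intro t ht
    have ht0 : (0:ℝ) < t := ht
    have hlt : ‖-Real.exp (-t)‖ < 1 := by
      rw [norm_neg, Real.norm_of_nonneg (Real.exp_nonneg _)]
      exact Real.exp_lt_one_iff.mpr (by linarith)
    have hgeo := tsum_geometric_of_norm_lt_one hlt
    have hrw : ∀ n : ℕ, F n t = (t ^ m * Real.exp (-t)) * (-Real.exp (-t)) ^ n := by
      intro n
      have h1 : (-Real.exp (-t)) ^ n = (-1:ℝ) ^ n * Real.exp ((n:ℝ) * (-t)) := by
        rw [Real.exp_nat_mul, neg_pow]
      rw [h1, show t ^ m * Real.exp (-t) * ((-1:ℝ) ^ n * Real.exp ((n:ℝ) * (-t)))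
          = (-1:ℝ) ^ n * (t ^ m * (Real.exp (-t) * Real.exp ((n:ℝ) * (-t)))) from by ring,
        ← Real.exp_add, show (-t + (n:ℝ) * (-t)) = -(((n:ℝ) + 1) * t) from by ring]
    rw [tsum_congr hrw, tsum_mul_left, hgeo]
    rw [sub_neg_eq_add]
    rw [Real.exp_neg]
    have hexp := Real.exp_pos t
    field_simp
    ring
  rw [← setIntegral_congr_fun measurableSet_Ioi hptw, ← key]
  have hintval : ∀ n : ℕ, ∫ t, F n t ∂μ
      = (m.factorial : ℝ) * ((-1:ℝ) ^ n / ((n:ℝ) + 1) ^ (m + 1)) := by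
    intro n
    rw [show (fun t => F n t) = fun t => (-1:ℝ)^n * (t ^ m * Real.exp (-(((n:ℝ) + 1) * t)))
      from rfl, integral_const_mul, int_pow_exp m (hpos n)]
    ring
  rw [tsum_congr hintval, tsum_mul_left]

lemma tendsto_f1 (m : ℕ) :
    Tendsto (fun t : ℝ => t ^ m / (1 + Real.exp t)) atTop (nhds 0) := by
  apply squeeze_zero' (g := fun t : ℝ => t ^ m * Real.exp (-t))
  · filter_upwards [eventually_gt_atTop (0:ℝ)] with t ht
    positivity
  · filter_upwards [eventually_gt_atTop (0:ℝ)] with t ht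
    have := f1_bound (m := m) ht
    rw [Real.norm_of_nonneg (by positivity), one_mul] at this
    exact this
  · exact tendsto_pow_mul_exp_neg_atTop_nhds_zero m

lemma G_eq_F (m : ℕ) (hm : 1 ≤ m) :
    ∫ t in Set.Ioi (0:ℝ), t ^ m * Real.exp t / (1 + Real.exp t) ^ 2
      = m * ∫ t in Set.Ioi (0:ℝ), t ^ (m - 1) / (1 + Real.exp t) := by
  set f : ℝ → ℝ := fun t => -(t ^ m / (1 + Real.exp t))
  set f' : ℝ → ℝ := fun t =>
    t ^ m * Real.exp t / (1 + Real.exp t) ^ 2 - (m:ℝ) * (t ^ (m - 1) / (1 + Real.exp t))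
  have hderiv : ∀ x ∈ Set.Ici (0:ℝ), HasDerivAt f (f' x) x := by
    intro x _
    have h1 : HasDerivAt (fun t : ℝ => t ^ m) ((m:ℝ) * x ^ (m - 1)) x := hasDerivAt_pow m x
    have h2 : HasDerivAt (fun t : ℝ => 1 + Real.exp t) (Real.exp x) x :=
      (Real.hasDerivAt_exp x).const_add 1
    have h3 : HasDerivAt f _ x := (h1.div h2 (one_add_exp_pos x).ne').neg
    convert h3 using 1
    have h4 := (one_add_exp_pos x).ne'
    simp only [f']
    rw [sq, ← neg_div, neg_sub, sub_div, mul_div_mul_right _ _ h4, mul_div_assoc, mul_div_assoc]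
  have f'int : IntegrableOn f' (Set.Ioi (0:ℝ)) :=
    (integ_f2 m).sub ((integ_f1 (m-1)).const_mul (m:ℝ))
  have hf : Tendsto f atTop (nhds 0) := by
    rw [show (0:ℝ) = -0 from (neg_zero).symm]
    exact (tendsto_f1 m).neg
  have key := integral_Ioi_of_hasDerivAt_of_tendsto' hderiv f'int hf
  have hf0 : f 0 = 0 := by
    simp only [f]
    rw [zero_pow (by omega)]
    norm_num
  rw [hf0, sub_zero] at key
  have hsplit := integral_sub (integ_f2 m) ((integ_f1 (m-1)).const_mul (m:ℝ))
  rw [show (fun t => f' t) = fun t =>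
    t ^ m * Real.exp t / (1 + Real.exp t) ^ 2 - (m:ℝ) * (t ^ (m - 1) / (1 + Real.exp t))
    from rfl] at key
  rw [hsplit] at key
  have := sub_eq_zero.mp key
  rw [this, integral_const_mul]

lemma G0 : ∫ t in Set.Ioi (0:ℝ), Real.exp t / (1 + Real.exp t) ^ 2 = 1/2 := by
  have f'int : IntegrableOn (fun t : ℝ => Real.exp t / (1 + Real.exp t) ^ 2)
      (Set.Ioi (0:ℝ)) := by
    refine (integ_f2 0).congr_fun (fun t _ => by simp only [pow_zero, one_mul]) measurableSet_Ioi
  have hderiv : ∀ x ∈ Set.Ici (0:ℝ),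
      HasDerivAt (fun t : ℝ => -(1 + Real.exp t)⁻¹) (Real.exp x / (1 + Real.exp x) ^ 2) x := by
    intro x _
    have h : HasDerivAt (fun t : ℝ => -(1 + Real.exp t)⁻¹) _ x := (((Real.hasDerivAt_exp x).const_add 1).inv (one_add_exp_pos x).ne').neg
    simpa [neg_div] using h
  have hf : Tendsto (fun t : ℝ => -(1 + Real.exp t)⁻¹) atTop (nhds 0) := by
    rw [show (0:ℝ) = -0 from (neg_zero).symm]
    apply Tendsto.neg
    apply tendsto_inv_atTop_zero.comp
    exact tendsto_atTop_add_const_left _ 1 Real.tendsto_exp_atTop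
  have key := integral_Ioi_of_hasDerivAt_of_tendsto' hderiv f'int hf
  rw [key]
  norm_num

lemma eta_eq (k : ℕ) (hk : 2 ≤ k) :
    ∑' n : ℕ, (-1 : ℝ) ^ n / ((n:ℝ) + 1) ^ k
      = (1 - 2 / (2:ℝ) ^ k) * ∑' n : ℕ, 1 / ((n:ℝ) + 1) ^ k := by
  have hg : Summable (fun n : ℕ => 1 / ((n:ℝ) + 1) ^ k) := summable_aux k hk
  have hf : Summable (fun n : ℕ => (-1 : ℝ) ^ n / ((n:ℝ) + 1) ^ k) := by
    refine Summable.of_norm_bounded hg (fun n => ?_)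
    rw [norm_div, norm_pow, norm_neg, norm_one, one_pow, Real.norm_of_nonneg (by positivity)]
  have hinj2 : Function.Injective (fun j : ℕ => 2 * j) := fun a b h => by
    simp only [] at h; omega
  have hinj2' : Function.Injective (fun j : ℕ => 2 * j + 1) := fun a b h => by
    simp only [] at h; omega
  set S := ∑' n : ℕ, 1 / ((n:ℝ) + 1) ^ k with hS
  have hO : ∑' j : ℕ, (1:ℝ) / (((2*j+1 : ℕ):ℝ) + 1) ^ k = (1/2^k) * S := by
    rw [hS, ← tsum_mul_left]
    refine tsum_congr (fun j => ?_)
    push_cast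
    rw [show ((2:ℝ)*(j:ℝ)+1+1) = 2*((j:ℝ)+1) by ring, mul_pow, div_mul_div_comm, one_mul]
  have hge : Summable (fun j : ℕ => (1:ℝ) / (((2*j : ℕ):ℝ) + 1) ^ k) :=
    hg.comp_injective hinj2
  have hgo : Summable (fun j : ℕ => (1:ℝ) / (((2*j+1 : ℕ):ℝ) + 1) ^ k) :=
    hg.comp_injective hinj2'
  have hfe : Summable (fun j : ℕ => (-1:ℝ) ^ (2*j) / (((2*j : ℕ):ℝ) + 1) ^ k) :=
    hf.comp_injective hinj2
  have hfo : Summable (fun j : ℕ => (-1:ℝ) ^ (2*j+1) / (((2*j+1 : ℕ):ℝ) + 1) ^ k) :=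
    hf.comp_injective hinj2'
  have hgeq := tsum_even_add_odd (f := fun n : ℕ => (1:ℝ) / ((n:ℝ) + 1) ^ k) hge hgo
  have hfeq := tsum_even_add_odd (f := fun n : ℕ => (-1:ℝ) ^ n / ((n:ℝ) + 1) ^ k) hfe hfo
  have hEf : (∑' j : ℕ, (-1:ℝ)^(2*j) / (((2*j:ℕ):ℝ)+1)^k)
      = ∑' j : ℕ, (1:ℝ)/(((2*j:ℕ):ℝ)+1)^k :=
    tsum_congr fun j => by rw [Even.neg_one_pow (even_two_mul j)]
  have hOf : (∑' j : ℕ, (-1:ℝ)^(2*j+1) / (((2*j+1:ℕ):ℝ)+1)^k) = -((1/2^k) * S) := by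
    rw [← hO, ← tsum_neg]
    refine tsum_congr fun j => ?_
    rw [Odd.neg_one_pow ⟨j, by ring⟩, neg_div, one_div]
  rw [← hfeq, hEf, hOf]
  rw [hO] at hgeq
  rw [hEf] at hfeq
  linear_combination hgeq

end helpers

/-- `aSeq i = (1 - 2^(1-2i)) ζ(2i)` for `i ≥ 1`, and `aSeq 0 = 1/2`. -/
noncomputable def aSeq : ℕ → ℝ
  | 0 => 1/2
  | (i+1) => (1 - (2:ℝ) ^ ((1 : ℤ) - 2 * ((i : ℤ) + 1))) *
      ∑' n : ℕ, (1 : ℝ) / ((n : ℝ) + 1) ^ (2 * (i + 1))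


section helpers2
open Set
lemma aSeq_succ_eq (i : ℕ) :
    aSeq (i + 1) = ∑' n : ℕ, (-1:ℝ) ^ n / ((n:ℝ) + 1) ^ (2*i+1+1) := by
  show (1 - (2:ℝ) ^ ((1 : ℤ) - 2 * ((i : ℤ) + 1))) *
      ∑' n : ℕ, (1 : ℝ) / ((n : ℝ) + 1) ^ (2 * (i + 1)) = _
  rw [eta_eq (2*i+1+1) (by omega)]
  have h2 : (2:ℝ) ^ ((1 : ℤ) - 2 * ((i : ℤ) + 1)) = 2 / 2 ^ (2*i+1+1) := by
    rw [zpow_sub₀ (two_ne_zero), zpow_one,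
      show (2 * ((i:ℤ) + 1)) = ((2*i+1+1 : ℕ) : ℤ) by push_cast; ring, zpow_natCast]
  rw [h2]
  simp only [show 2 * (i+1) = 2*i+1+1 from by ring]

lemma I2 (i : ℕ) :
    ∫ t in Set.Ioi (0:ℝ), t ^ (2*i) * Real.exp t / (1 + Real.exp t) ^ 2
      = ((2*i).factorial : ℝ) * aSeq i := by
  match i with
  | 0 =>
    rw [show aSeq 0 = 1/2 from rfl]
    rw [setIntegral_congr_fun measurableSet_Ioi
      (fun t (_ : t ∈ Set.Ioi (0:ℝ)) => by rw [mul_zero, pow_zero, one_mul]), G0]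
    norm_num
  | (j+1) =>
    simp only [show 2 * (j+1) = 2*j+1+1 from by ring]
    rw [G_eq_F (2*j+1+1) (by omega)]
    simp only [show 2*j+1+1-1 = 2*j+1 from by omega]
    rw [F_eq (2*j+1) (by omega), aSeq_succ_eq j, Nat.factorial_succ (2*j+1)]
    push_cast
    ring

end helpers2

theorem stmt_1 (i : ℕ) :
    aSeq (i + 1) - aSeq i =
      ∫ t in Set.Ioi (0 : ℝ), (1 / (1 + Real.exp t) ^ 2) *
        (t ^ (2 * i + 1) / (Nat.factorial (2 * i + 1) : ℝ) +
         t ^ (2 * i) / (Nat.factorial (2 * i) : ℝ)) := by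
  open Set in
  have hcongr : ∀ t ∈ Set.Ioi (0:ℝ),
      (1 / (1 + Real.exp t) ^ 2) * (t ^ (2*i+1) / ((2*i+1).factorial : ℝ)
        + t ^ (2*i) / ((2*i).factorial : ℝ))
      = (t ^ (2*i+1) / (1 + Real.exp t)) / ((2*i+1).factorial : ℝ)
        + (t ^ (2*i) / (1 + Real.exp t)) / ((2*i).factorial : ℝ)
        - ((t ^ (2*i+1) * Real.exp t / (1 + Real.exp t) ^ 2) / ((2*i+1).factorial : ℝ)
          + (t ^ (2*i) * Real.exp t / (1 + Real.exp t) ^ 2) / ((2*i).factorial : ℝ)) := by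
    intro t _
    have h := (one_add_exp_pos t).ne'
    have h1 : ((2*i+1).factorial : ℝ) ≠ 0 := Nat.cast_ne_zero.mpr (Nat.factorial_ne_zero _)
    have h0 : ((2*i).factorial : ℝ) ≠ 0 := Nat.cast_ne_zero.mpr (Nat.factorial_ne_zero _)
    field_simp
    ring
  rw [setIntegral_congr_fun measurableSet_Ioi hcongr]
  have ha1 : IntegrableOn (fun t : ℝ => t ^ (2*i+1) / (1 + Real.exp t) / ((2*i+1).factorial : ℝ))
      (Set.Ioi 0) := (integ_f1 (2*i+1)).div_const _
  have ha2 : IntegrableOn (fun t : ℝ => t ^ (2*i) / (1 + Real.exp t) / ((2*i).factorial : ℝ))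
      (Set.Ioi 0) := (integ_f1 (2*i)).div_const _
  have hb1 : IntegrableOn
      (fun t : ℝ => t ^ (2*i+1) * Real.exp t / (1 + Real.exp t) ^ 2 / ((2*i+1).factorial : ℝ))
      (Set.Ioi 0) := (integ_f2 (2*i+1)).div_const _
  have hb2 : IntegrableOn
      (fun t : ℝ => t ^ (2*i) * Real.exp t / (1 + Real.exp t) ^ 2 / ((2*i).factorial : ℝ))
      (Set.Ioi 0) := (integ_f2 (2*i)).div_const _
  have hA : IntegrableOn (fun t : ℝ => t ^ (2*i+1) / (1 + Real.exp t) / ((2*i+1).factorial : ℝ)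
      + t ^ (2*i) / (1 + Real.exp t) / ((2*i).factorial : ℝ)) (Set.Ioi 0) := ha1.add ha2
  have hB : IntegrableOn
      (fun t : ℝ => t ^ (2*i+1) * Real.exp t / (1 + Real.exp t) ^ 2 / ((2*i+1).factorial : ℝ)
      + t ^ (2*i) * Real.exp t / (1 + Real.exp t) ^ 2 / ((2*i).factorial : ℝ)) (Set.Ioi 0) :=
    hb1.add hb2
  rw [integral_sub hA hB, integral_add ha1 ha2, integral_add hb1 hb2,
    integral_div, integral_div, integral_div, integral_div]
  rw [F_eq (2*i+1) (by omega), G_eq_F (2*i+1) (by omega)]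
  simp only [show 2*i+1-1 = 2*i from by omega]
  rw [I2 i, aSeq_succ_eq i, Nat.factorial_succ (2*i)]
  have h1 : ((2*i+1).factorial : ℝ) ≠ 0 := Nat.cast_ne_zero.mpr (Nat.factorial_ne_zero _)
  have h0 : ((2*i).factorial : ℝ) ≠ 0 := Nat.cast_ne_zero.mpr (Nat.factorial_ne_zero _)
  rw [Nat.factorial_succ (2*i)] at h1
  push_cast at h1 ⊢
  field_simp
  ring
end

section
/- ∑_{i=0}^{∞} i·(a_{i+1} - a_i) = 1/4, where a_0 = 1/2 and a_i = (1-2^{1-2i})ζ(2i) for i ≥ 1. -/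
open MeasureTheory Real Filter

lemma sumP (s : ℕ) (hs : 2 ≤ s) : Summable (fun n : ℕ => (1:ℝ)/((n:ℝ)+1)^s) := by
  have h := Real.summable_one_div_nat_pow.mpr (show 1 < s by omega)
  have h2 := (summable_nat_add_iff (f := fun n : ℕ => 1/(n:ℝ)^s) 1).mpr h
  exact h2.congr (fun n => by push_cast; ring)

lemma tele (g : ℕ → ℝ) (hmono : ∀ k, g (k+1) ≤ g k) (hlim : Tendsto g atTop (nhds 0)) :
    HasSum (fun k => g k - g (k+1)) (g 0) := by
  rw [hasSum_iff_tendsto_nat_of_nonneg (fun k => sub_nonneg.mpr (hmono k))]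
  simp only [Finset.sum_range_sub' g]
  simpa using tendsto_const_nhds.sub hlim


lemma eta_hasSum (s : ℕ) (hs : 2 ≤ s) :
    HasSum (fun n : ℕ => (-1:ℝ)^n / ((n:ℝ)+1)^s)
      ((1 - 2*((2:ℝ)^s)⁻¹) * ∑' n : ℕ, (1:ℝ)/((n:ℝ)+1)^s) := by
  set Z := ∑' n : ℕ, (1:ℝ)/((n:ℝ)+1)^s with hZ
  have hP : HasSum (fun n : ℕ => (1:ℝ)/((n:ℝ)+1)^s) Z := (sumP s hs).hasSum
  have hPo : HasSum (fun k : ℕ => (1:ℝ)/((2*(k:ℝ))+2)^s) (((2:ℝ)^s)⁻¹ * Z) := by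
    refine HasSum.congr_fun (hP.mul_left (((2:ℝ)^s)⁻¹)) (fun k => ?_)
    have h1 : (2*(k:ℝ)+2)^s = 2^s * ((k:ℝ)+1)^s := by
      rw [← mul_pow]; ring_nf
    have h2 : ((k:ℝ)+1)^s ≠ 0 := by positivity
    rw [h1]
    field_simp
  have hPe : Summable (fun k : ℕ => (1:ℝ)/((2*(k:ℝ))+1)^s) := by
    have h3 := (sumP s hs).comp_injective (f := fun n : ℕ => (1:ℝ)/((n:ℝ)+1)^s)
      (mul_right_injective₀ (two_ne_zero) : Function.Injective (fun k : ℕ => 2*k))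
    refine h3.congr (fun k => ?_)
    simp only [Function.comp_def]
    push_cast
    ring_nf
  obtain ⟨A, hA⟩ := hPe
  have hsplit : HasSum (fun n : ℕ => (1:ℝ)/((n:ℝ)+1)^s) (A + ((2:ℝ)^s)⁻¹ * Z) := by
    refine HasSum.even_add_odd ?_ ?_
    · exact HasSum.congr_fun hA (fun k => by push_cast; ring_nf)
    · exact HasSum.congr_fun hPo (fun k => by push_cast; ring_nf)
  have hAval : A = Z - ((2:ℝ)^s)⁻¹ * Z := by
    have := hP.unique hsplit; linarith
  subst hAval
  have hfin := HasSum.even_add_odd (f := fun n : ℕ => (-1:ℝ)^n / ((n:ℝ)+1)^s)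
    (HasSum.congr_fun hA (fun k => by push_cast [pow_mul]; ring_nf))
    (HasSum.congr_fun (hPo.neg) (fun k => by push_cast [pow_succ, pow_mul]; ring_nf))
  convert hfin using 1
  ring


lemma aSeq_hasSum (i : ℕ) :
    HasSum (fun n : ℕ => (-1:ℝ)^n / ((n:ℝ)+1)^(2*i+2)) (aSeq (i+1)) := by
  have h := eta_hasSum (2*i+2) (by omega)
  have hexp : (2:ℝ) ^ ((1 : ℤ) - 2 * ((i : ℤ) + 1)) = 2*((2:ℝ)^(2*i+2))⁻¹ := by
    have : (1 : ℤ) - 2 * ((i : ℤ) + 1) = 1 + (-((2*i+2 : ℕ) : ℤ)) := by push_cast; ring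
    rw [this, zpow_add₀ (two_ne_zero), zpow_one, zpow_neg, zpow_natCast]
  have : aSeq (i+1) = (1 - 2*((2:ℝ)^(2*i+2))⁻¹) * ∑' n : ℕ, (1:ℝ)/((n:ℝ)+1)^(2*i+2) := by
    show (1 - (2:ℝ) ^ ((1 : ℤ) - 2 * ((i : ℤ) + 1))) *
      ∑' n : ℕ, (1 : ℝ) / ((n : ℝ) + 1) ^ (2 * (i + 1)) = _
    rw [hexp, show 2*(i+1) = 2*i+2 from by ring]
  rw [this]
  exact h

lemma geom_aux {x : ℝ} (h0 : 0 ≤ x) (h1 : x < 1) :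
    HasSum (fun j : ℕ => ((j:ℝ)+1) * (x^(j+1) - x^(j+2))) (x/(1-x)) := by
  have hx : ‖x‖ < 1 := by rwa [Real.norm_eq_abs, abs_of_nonneg h0]
  have h := hasSum_coe_mul_geometric_of_norm_lt_one (𝕜 := ℝ) hx
  have h2 : HasSum (fun j : ℕ => ((j:ℝ)+1) * x^(j+1)) (x/(1-x)^2) := by
    have h3 : HasSum (fun n : ℕ => ((n+1:ℕ):ℝ) * x^(n+1)) (x/(1-x)^2) := by
      rw [hasSum_nat_add_iff (f := fun n : ℕ => (n:ℝ) * x^n) 1]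
      simpa using h
    exact HasSum.congr_fun h3 (fun j => by push_cast; ring)
  have hne : (1:ℝ) - x ≠ 0 := sub_ne_zero.mpr (by linarith)
  have h4 := h2.mul_left (1-x)
  have hval : (1-x) * (x/(1-x)^2) = x/(1-x) := by field_simp
  rw [hval] at h4
  exact HasSum.congr_fun h4 (fun j => by ring)

noncomputable def gg (j n : ℕ) : ℝ :=
  ((j:ℝ)+1) * ((-1:ℝ)^n / ((n:ℝ)+1)^(2*j+4) - (-1:ℝ)^n / ((n:ℝ)+1)^(2*j+2))

lemma pow_key (n : ℕ) (m : ℕ) : ((((n:ℝ)+1)^2)⁻¹) ^ m = 1/((n:ℝ)+1)^(2*m) := by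
  rw [inv_pow, ← pow_mul, one_div]

lemma gg_eq (j n : ℕ) :
    gg j n = -((-1:ℝ)^n * (((j:ℝ)+1) *
      (((((n:ℝ)+1)^2)⁻¹)^(j+1) - ((((n:ℝ)+1)^2)⁻¹)^(j+2)))) := by
  rw [gg, pow_key n (j+1), pow_key n (j+2),
    show 2*(j+1) = 2*j+2 from by ring, show 2*(j+2) = 2*j+4 from by ring]
  ring

lemma x_facts (n : ℕ) : 0 ≤ ((((n:ℝ)+2)^2)⁻¹) ∧ ((((n:ℝ)+2)^2)⁻¹) < 1 := by
  constructor
  · positivity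
  · rw [inv_lt_one_iff₀]
    right
    nlinarith [Nat.cast_nonneg (α := ℝ) n]

lemma x_val (n : ℕ) : ((((n:ℝ)+2)^2)⁻¹) / (1 - ((((n:ℝ)+2)^2)⁻¹)) =
    1/(((n:ℝ)+1)*(((n:ℝ)+1)+2)) := by
  have h1 : ((n:ℝ)+2)^2 ≠ 0 := by positivity
  have h2 : (1:ℝ) - (((n:ℝ)+2)^2)⁻¹ ≠ 0 := by
    have := (x_facts n).2; intro h; rw [sub_eq_zero] at h; rw [← h] at this; simp at this
  have hxne : ((((n:ℝ)+2)^2)⁻¹) ≠ 0 := by positivity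
  have key : 1 - ((((n:ℝ)+2)^2)⁻¹) = ((((n:ℝ)+2)^2)⁻¹) * (((n:ℝ)+1)*(((n:ℝ)+1)+2)) := by
    field_simp
    ring
  rw [key, div_mul_cancel_left₀ hxne, one_div]

lemma col_hasSum (n : ℕ) :
    HasSum (fun j => gg j n) ((-1:ℝ)^(n+1) * (1/((n:ℝ)*((n:ℝ)+2)))) := by
  cases n with
  | zero =>
      have : ∀ j : ℕ, gg j 0 = 0 := by
        intro j; rw [gg]; norm_num
      simp only [this]
      norm_num
  | succ n =>
      set x : ℝ := ((((n:ℝ)+2)^2)⁻¹) with hxdef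
      obtain ⟨h0, h1⟩ := x_facts n
      have h := ((geom_aux h0 h1).mul_left ((-1:ℝ)^(n+1))).neg
      rw [x_val n] at h
      have h2 : HasSum (fun j => gg j (n+1)) (-((-1:ℝ)^(n+1) * (1/(((n:ℝ)+1)*(((n:ℝ)+1)+2))))) :=
        HasSum.congr_fun h (fun j => by rw [gg_eq]; push_cast; ring)
      convert h2 using 1
      push_cast
      ring

lemma col_abs_hasSum (n : ℕ) :
    HasSum (fun j => |gg j n|) (1/((n:ℝ)*((n:ℝ)+2))) := by
  cases n with
  | zero =>
      have h : ∀ j : ℕ, gg j 0 = 0 := by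
        intro j; rw [gg]; norm_num
      simp only [h]
      norm_num
  | succ n =>
      obtain ⟨h0, h1⟩ := x_facts n
      set x : ℝ := ((((n:ℝ)+2)^2)⁻¹) with hxdef
      have habs : ∀ j : ℕ, |gg j (n+1)| = ((j:ℝ)+1) * (x^(j+1) - x^(j+2)) := by
        intro j
        have hle : x^(j+2) ≤ x^(j+1) :=
          pow_le_pow_of_le_one h0 h1.le (by omega)
        have hnn : (0:ℝ) ≤ ((j:ℝ)+1) * (x^(j+1) - x^(j+2)) := by
          have : (0:ℝ) ≤ (j:ℝ)+1 := by positivity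
          nlinarith
        have he : gg j (n+1) = -((-1:ℝ)^(n+1) * (((j:ℝ)+1) * (x^(j+1) - x^(j+2)))) := by
          rw [gg_eq]; push_cast; rw [hxdef]; ring_nf
        rw [he, abs_neg, abs_mul, abs_pow, abs_neg, abs_one, one_pow, one_mul,
          abs_of_nonneg hnn]
      have h := geom_aux h0 h1
      rw [x_val n] at h
      have h2 : HasSum (fun j => |gg j (n+1)|) (1/(((n:ℝ)+1)*(((n:ℝ)+1)+2))) :=
        HasSum.congr_fun h (fun j => habs j)
      convert h2 using 1
      push_cast
      ring

lemma tendsto_inv_lin (a b : ℝ) (ha : 0 < a) :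
    Tendsto (fun k : ℕ => 1/(a*(k:ℝ)+b)) atTop (nhds 0) := by
  have h1 : Tendsto (fun k : ℕ => a*(k:ℝ)+b) atTop atTop := by
    apply tendsto_atTop_add_const_right
    exact Tendsto.const_mul_atTop ha tendsto_natCast_atTop_atTop
  simpa [one_div, Function.comp_def] using tendsto_inv_atTop_zero.comp h1

lemma tele1 : HasSum (fun k : ℕ => 1/((2*(k:ℝ)+1)*(2*(k:ℝ)+3))) (1/2) := by
  have h := tele (fun k : ℕ => 1/(2*(2*(k:ℝ)+1))) ?_ ?_
  · have h0 : 1/(2*(2*((0:ℕ):ℝ)+1)) = 1/2 := by norm_num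
    rw [h0] at h
    refine HasSum.congr_fun h (fun k => ?_)
    have a1 : (2*(k:ℝ)+1) ≠ 0 := by positivity
    have a2 : (2*(k:ℝ)+3) ≠ 0 := by positivity
    have a3 : (2*((k:ℝ)+1)+1) = 2*(k:ℝ)+3 := by ring
    push_cast
    rw [a3]
    field_simp
    ring
  · intro k
    apply one_div_le_one_div_of_le (by positivity)
    push_cast
    linarith
  · have := tendsto_inv_lin 4 2 (by norm_num)
    refine this.congr (fun k => ?_)
    ring_nf
lemma tele2 : HasSum (fun k : ℕ => 1/((2*(k:ℝ)+2)*(2*(k:ℝ)+4))) (1/4) := by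
  have h := tele (fun k : ℕ => 1/(4*((k:ℝ)+1))) ?_ ?_
  · have h0 : 1/(4*(((0:ℕ):ℝ)+1)) = 1/4 := by norm_num
    rw [h0] at h
    refine HasSum.congr_fun h (fun k => ?_)
    have a1 : ((k:ℝ)+1) ≠ 0 := by positivity
    have a2 : ((k:ℝ)+2) ≠ 0 := by positivity
    push_cast
    field_simp
    ring
  · intro k
    apply one_div_le_one_div_of_le (by positivity)
    push_cast
    linarith
  · have := tendsto_inv_lin 4 4 (by norm_num)
    refine this.congr (fun k => ?_)
    ring_nf

lemma final_sum : HasSum (fun n : ℕ => (-1:ℝ)^(n+1) * (1/((n:ℝ)*((n:ℝ)+2)))) (1/4) := by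
  set t := fun n : ℕ => (-1:ℝ)^(n+1) * (1/((n:ℝ)*((n:ℝ)+2))) with ht
  have he : HasSum (fun k : ℕ => t (2*k+1)) (1/2) := by
    refine HasSum.congr_fun tele1 (fun k => ?_)
    rw [ht]
    simp only []
    have : ((-1:ℝ))^(2*k+1+1) = 1 := by
      rw [show 2*k+1+1 = 2*(k+1) from by ring, pow_mul]; norm_num
    rw [this]
    push_cast
    ring_nf
  have ho : HasSum (fun k : ℕ => t (2*k+1+1)) (-(1/4)) := by
    refine HasSum.congr_fun tele2.neg (fun k => ?_)
    rw [ht]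
    simp only []
    have : ((-1:ℝ))^(2*k+1+1+1) = -1 := by
      rw [show 2*k+1+1+1 = 2*(k+1)+1 from by ring, pow_succ, pow_mul]; norm_num
    rw [this]
    push_cast
    ring_nf
  have hs : HasSum (fun m : ℕ => t (m+1)) (1/2 + -(1/4)) := HasSum.even_add_odd he ho
  have := (hasSum_nat_add_iff (f := t) 1).mp hs
  have hv : (1/2 + -(1/4) + ∑ i ∈ Finset.range 1, t i) = 1/4 := by
    rw [Finset.sum_range_one, ht]
    norm_num
  rwa [hv] at this

lemma S2 : Summable (fun n : ℕ => 1/((n:ℝ)*((n:ℝ)+2))) := by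
  have hb : Summable (fun n : ℕ => 1/(n:ℝ)^2) :=
    Real.summable_one_div_nat_pow.mpr one_lt_two
  refine Summable.of_nonneg_of_le (fun n => by positivity) (fun n => ?_) hb
  match n with
  | 0 => norm_num
  | (m+1) =>
      apply one_div_le_one_div_of_le (by positivity)
      push_cast
      nlinarith [Nat.cast_nonneg (α := ℝ) m]

lemma hFabs : Summable (fun p : ℕ × ℕ => |gg p.2 p.1|) := by
  refine (summable_prod_of_nonneg (fun p => abs_nonneg _)).mpr ⟨fun n => (col_abs_hasSum n).summable, ?_⟩
  exact S2.congr (fun n => ((col_abs_hasSum n).tsum_eq).symm)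

lemma hF : Summable (fun p : ℕ × ℕ => gg p.2 p.1) := Summable.of_abs hFabs

lemma hshift (j : ℕ) :
    HasSum (fun n => gg j n) (((j:ℝ)+1) * (aSeq (j+2) - aSeq (j+1))) := by
  have hA := aSeq_hasSum (j+1)
  rw [show 2*(j+1)+2 = 2*j+4 from by ring] at hA
  have hB := aSeq_hasSum j
  exact HasSum.congr_fun ((hA.sub hB).mul_left ((j:ℝ)+1)) (fun n => by rw [gg])

theorem stmt_6 : ∑' i : ℕ, (i : ℝ) * (aSeq (i + 1) - aSeq i) = 1 / 4 := by
  set f := fun i : ℕ => (i : ℝ) * (aSeq (i + 1) - aSeq i) with hfdef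
  have hrowcol := (summable_prod_of_nonneg (f := fun p : ℕ × ℕ => |gg p.1 p.2|)
    (fun p => abs_nonneg _)).mp hFabs.prod_symm
  have hsum_shift : Summable (fun j : ℕ => ((j:ℝ)+1) * (aSeq (j+2) - aSeq (j+1))) := by
    refine Summable.of_norm_bounded hrowcol.2 (fun j => ?_)
    rw [Real.norm_eq_abs, ← (hshift j).tsum_eq]
    have := norm_tsum_le_tsum_norm (f := fun n => gg j n) ?_
    · simpa [Real.norm_eq_abs] using this
    · simpa [Real.norm_eq_abs] using hrowcol.1 j
  have hfs : Summable (fun j : ℕ => f (j+1)) :=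
    hsum_shift.congr (fun j => by rw [hfdef]; push_cast; ring)
  have hf : Summable f := (summable_nat_add_iff 1).mp hfs
  have hcomm : ∑' (n : ℕ) (j : ℕ), gg j n = ∑' (j : ℕ) (n : ℕ), gg j n :=
    Summable.tsum_comm (f := gg) hF.prod_symm
  calc ∑' i : ℕ, f i = f 0 + ∑' j : ℕ, f (j+1) := Summable.tsum_eq_zero_add hf
    _ = ∑' j : ℕ, f (j+1) := by rw [hfdef]; norm_num
    _ = ∑' (j : ℕ) (n : ℕ), gg j n := by
        refine tsum_congr (fun j => ?_)
        rw [hfdef, (hshift j).tsum_eq]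
        show ((j+1:ℕ):ℝ) * (aSeq (j+1+1) - aSeq (j+1)) = _
        push_cast
        ring_nf
    _ = ∑' (n : ℕ) (j : ℕ), gg j n := hcomm.symm
    _ = ∑' n : ℕ, (-1:ℝ)^(n+1) * (1/((n:ℝ)*((n:ℝ)+2))) :=
        tsum_congr (fun n => (col_hasSum n).tsum_eq)
    _ = 1/4 := final_sum.tsum_eq
end

section
/- For every integer l ≥ 2, ∫₀^∞ t^l·e^{-t}/(1+e^t)² dt = l!·(1 - 2(1-2^{-l})ζ(l+1) + (1-2^{1-l})ζ(l)). -/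
open MeasureTheory Real Set

lemma aux_integral (l : ℕ) {c : ℝ} (hc : 0 < c) :
    ∫ t in Set.Ioi (0:ℝ), t ^ l * Real.exp (-(c * t)) = l.factorial / c ^ (l + 1) := by
  have h := Real.integral_rpow_mul_exp_neg_mul_Ioi (a := (l:ℝ)+1) (r := c) (by positivity) hc
  rw [show ((l:ℝ)+1) - 1 = (l:ℝ) by ring] at h
  have h2 : (∫ t in Set.Ioi (0:ℝ), t ^ l * Real.exp (-(c * t)))
      = ∫ t in Set.Ioi (0:ℝ), t ^ ((l:ℝ)) * Real.exp (-(c * t)) := by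
    refine setIntegral_congr_fun measurableSet_Ioi fun t ht => ?_
    rw [Real.rpow_natCast]
  rw [h2, h, Real.Gamma_nat_eq_factorial, show ((l:ℝ)+1) = ((l+1 : ℕ):ℝ) by push_cast; ring,
    Real.rpow_natCast, div_pow, one_pow]
  ring

lemma aux_integrable (l : ℕ) {c : ℝ} (hc : 0 < c) :
    IntegrableOn (fun t : ℝ => t ^ l * Real.exp (-(c * t))) (Set.Ioi 0) := by
  have h := integrableOn_rpow_mul_exp_neg_mul_rpow (p := 1) (s := (l:ℝ)) (b := c)
    (lt_of_lt_of_le (by norm_num) (Nat.cast_nonneg l)) one_pos hc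
  refine h.congr_fun (fun t ht => ?_) measurableSet_Ioi
  beta_reduce
  rw [Real.rpow_natCast, Real.rpow_one]
  ring_nf

lemma aux_pointwise (l : ℕ) {t : ℝ} (ht : 0 < t) :
    HasSum (fun n : ℕ => (-1:ℝ)^n * ((n:ℝ)+1) * (t ^ l * Real.exp (-(((n:ℝ)+3) * t))))
      (t ^ l * Real.exp (-t) / (1 + Real.exp t) ^ 2) := by
  set x : ℝ := -Real.exp (-t) with hxdef
  have hx : ‖x‖ < 1 := by
    rw [norm_neg, Real.norm_eq_abs, abs_of_pos (Real.exp_pos _)]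
    exact Real.exp_lt_one_iff.2 (by linarith)
  have h1 := hasSum_coe_mul_geometric_of_norm_lt_one hx
  have h2 := hasSum_geometric_of_norm_lt_one hx
  have h3 := (h1.add h2).mul_left (t ^ l * Real.exp (-(3*t)))
  have heq : (fun n : ℕ => (t ^ l * Real.exp (-(3*t))) * ((n:ℝ) * x ^ n + x ^ n))
      = fun n : ℕ => (-1:ℝ)^n * ((n:ℝ)+1) * (t ^ l * Real.exp (-(((n:ℝ)+3) * t))) := by
    funext n
    rw [show -(((n:ℝ)+3) * t) = (n:ℝ) * (-t) + (-(3*t)) by ring, Real.exp_add,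
      Real.exp_nat_mul, hxdef, neg_pow, ← Real.exp_nat_mul]
    ring
  rw [heq] at h3
  convert h3 using 1
  · rfl
  have he : Real.exp (-t) = (Real.exp t)⁻¹ := Real.exp_neg t
  have he3 : Real.exp (-(3*t)) = ((Real.exp t)⁻¹) ^ 3 := by
    rw [show -(3*t) = (3:ℕ) * (-t) by push_cast; ring, Real.exp_nat_mul, he]
  have hpos : (0:ℝ) < Real.exp t := Real.exp_pos t
  rw [hxdef, he, he3, show (1:ℝ) - -(Real.exp t)⁻¹ = 1 + (Real.exp t)⁻¹ from by ring]
  have hne : Real.exp t ≠ 0 := ne_of_gt hpos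
  have hne2 : 1 + (Real.exp t)⁻¹ ≠ 0 := by positivity
  have hne3 : 1 + Real.exp t ≠ 0 := by positivity
  field_simp
  ring

lemma aux_Z_summable {s : ℕ} (hs : 2 ≤ s) : Summable (fun n : ℕ => (1:ℝ) / ((n:ℝ)+1)^s) := by
  have h := (summable_one_div_nat_pow (p := s)).2 hs
  have h2 := (summable_nat_add_iff 1).2 h
  refine h2.congr fun n => ?_
  push_cast
  ring

lemma aux_eta_summable {s : ℕ} (hs : 2 ≤ s) :
    Summable (fun n : ℕ => (-1:ℝ)^n / ((n:ℝ)+1)^s) := by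
  refine Summable.of_norm ((aux_Z_summable hs).congr fun n => ?_)
  rw [norm_div, norm_pow, norm_neg, norm_one, one_pow, norm_pow, Real.norm_eq_abs,
    abs_of_pos (by positivity : (0:ℝ) < (n:ℝ)+1)]

lemma aux_T_summable {s : ℕ} (hs : 2 ≤ s) :
    Summable (fun n : ℕ => (-1:ℝ)^n / ((n:ℝ)+3)^s) := by
  refine Summable.of_norm (Summable.of_nonneg_of_le (fun n => norm_nonneg _)
    (fun n => ?_) (aux_Z_summable hs))
  rw [norm_div, norm_pow, norm_neg, norm_one, one_pow, norm_pow, Real.norm_eq_abs,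
    abs_of_pos (by positivity : (0:ℝ) < (n:ℝ)+3)]
  gcongr
  linarith

lemma aux_shift (s : ℕ) (hs : 2 ≤ s) :
    ∑' n : ℕ, (-1:ℝ)^n / ((n:ℝ)+3)^s
      = (∑' n : ℕ, (-1:ℝ)^n / ((n:ℝ)+1)^s) - 1 + ((1:ℝ)/2)^s := by
  have hsum := aux_eta_summable hs
  have h := Summable.sum_add_tsum_nat_add (f := fun n : ℕ => (-1:ℝ)^n / ((n:ℝ)+1)^s) 2 hsum
  have hcongr : ∑' n : ℕ, (-1:ℝ)^(n+2) / (((n+2:ℕ):ℝ)+1)^s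
      = ∑' n : ℕ, (-1:ℝ)^n / ((n:ℝ)+3)^s := by
    refine tsum_congr fun n => ?_
    have h1 : (-1:ℝ)^(n+2) = (-1)^n := by rw [pow_add]; norm_num
    rw [h1]
    push_cast
    ring_nf
  have h2 : (∑ i ∈ Finset.range 2, (-1:ℝ)^i / ((i:ℝ)+1)^s) = 1 - ((1:ℝ)/2)^s := by
    rw [Finset.sum_range_succ, Finset.sum_range_one, one_div_pow]
    norm_num
    ring
  rw [← hcongr]
  have h3 := h
  rw [h2] at h3
  linarith [h3]

lemma aux_term (s k : ℕ) :
    (1:ℝ) / (((2*k+1:ℕ):ℝ)+1)^s = ((1:ℝ)/2)^s * ((1:ℝ) / ((k:ℝ)+1)^s) := by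
  rw [show ((2*k+1:ℕ):ℝ)+1 = 2*(k:ℝ)+2 by push_cast; ring]
  simp only [← one_div_pow, ← mul_pow]
  congr 1
  have hk : ((k:ℝ)+1) ≠ 0 := by positivity
  field_simp

lemma aux_eta (s : ℕ) (hs : 2 ≤ s) :
    ∑' n : ℕ, (-1:ℝ)^n / ((n:ℝ)+1)^s
      = (1 - 2 * ((1:ℝ)/2)^s) * ∑' n : ℕ, (1:ℝ) / ((n:ℝ)+1)^s := by
  have hZ := aux_Z_summable hs
  have hodd : HasSum (fun k : ℕ => (1:ℝ) / (((2*k+1:ℕ):ℝ)+1)^s)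
      (((1:ℝ)/2)^s * ∑' n : ℕ, (1:ℝ) / ((n:ℝ)+1)^s) :=
    (hZ.hasSum.mul_left (((1:ℝ)/2)^s)).congr_fun fun k => aux_term s k
  have hevensum : Summable (fun k : ℕ => (1:ℝ) / (((2*k:ℕ):ℝ)+1)^s) := by
    have hinj : Function.Injective (fun k : ℕ => 2*k) := fun a b h => by simpa using h
    have := hZ.comp_injective hinj
    exact this
  have hA := hevensum.hasSum
  have hsplit := HasSum.even_add_odd (f := fun n : ℕ => (1:ℝ)/((n:ℝ)+1)^s) hA hodd
  have hAval : (∑' k : ℕ, (1:ℝ) / (((2*k:ℕ):ℝ)+1)^s)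
      = (1 - ((1:ℝ)/2)^s) * ∑' n : ℕ, (1:ℝ) / ((n:ℝ)+1)^s := by
    have h := hsplit.unique hZ.hasSum
    linarith [h]
  rw [hAval] at hA
  have hoddneg : HasSum (fun k : ℕ => (-1:ℝ)^(2*k+1) / (((2*k+1:ℕ):ℝ)+1)^s)
      (-(((1:ℝ)/2)^s * ∑' n : ℕ, (1:ℝ) / ((n:ℝ)+1)^s)) := by
    refine hodd.neg.congr_fun fun k => ?_
    rw [pow_succ, pow_mul, neg_one_sq, one_pow]
    ring
  have heven2 : HasSum (fun k : ℕ => (-1:ℝ)^(2*k) / (((2*k:ℕ):ℝ)+1)^s)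
      ((1 - ((1:ℝ)/2)^s) * ∑' n : ℕ, (1:ℝ) / ((n:ℝ)+1)^s) := by
    refine hA.congr_fun fun k => ?_
    rw [pow_mul, neg_one_sq, one_pow]
  have hfinal := HasSum.even_add_odd (f := fun n : ℕ => (-1:ℝ)^n/((n:ℝ)+1)^s) heven2 hoddneg
  rw [hfinal.tsum_eq]
  ring

lemma aux_norm_summable (l : ℕ) (hl : 2 ≤ l) :
    Summable (fun n : ℕ => ((n:ℝ)+1) * ((l.factorial:ℝ) / ((n:ℝ)+3)^(l+1))) := by
  refine Summable.of_nonneg_of_le (fun n => by positivity) (fun n => ?_)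
    (((aux_Z_summable (le_refl 2)).mul_left (l.factorial:ℝ)))
  have h3 : (0:ℝ) < ((n:ℝ)+3)^(l+1) := by positivity
  have h1 : (0:ℝ) < ((n:ℝ)+1)^2 := by positivity
  rw [mul_div_assoc', mul_comm, mul_one_div, div_le_div_iff₀ h3 h1]
  have key : ((n:ℝ)+1)^3 ≤ ((n:ℝ)+3)^(l+1) := by
    calc ((n:ℝ)+1)^3 ≤ ((n:ℝ)+3)^3 := by gcongr <;> linarith
    _ ≤ ((n:ℝ)+3)^(l+1) := by
        apply pow_le_pow_right₀ (by linarith)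
        omega
  calc (l.factorial:ℝ) * ((n:ℝ)+1) * ((n:ℝ)+1)^2 = (l.factorial:ℝ) * ((n:ℝ)+1)^3 := by ring
  _ ≤ (l.factorial:ℝ) * ((n:ℝ)+3)^(l+1) := by
      apply mul_le_mul_of_nonneg_left key (by positivity)

theorem stmt_10 (l : ℕ) (hl : 2 ≤ l) :
    ∫ t in Set.Ioi (0 : ℝ), t ^ l * Real.exp (-t) / (1 + Real.exp t) ^ 2
      = (Nat.factorial l : ℝ) *
        (1 - 2 * (1 - (2:ℝ) ^ (-(l : ℤ))) * (∑' n : ℕ, (1 : ℝ) / ((n : ℝ) + 1) ^ (l + 1))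
           + (1 - (2:ℝ) ^ ((1 : ℤ) - l)) * ∑' n : ℕ, (1 : ℝ) / ((n : ℝ) + 1) ^ l) := by
  have hl1 : 2 ≤ l + 1 := by omega
  set F : ℕ → ℝ → ℝ :=
    fun n t => (-1:ℝ)^n * ((n:ℝ)+1) * (t ^ l * Real.exp (-(((n:ℝ)+3) * t))) with hF
  have hc : ∀ n : ℕ, (0:ℝ) < (n:ℝ)+3 := fun n => by positivity
  have hFint : ∀ n : ℕ, Integrable (F n) (volume.restrict (Set.Ioi 0)) := fun n =>
    (aux_integrable l (hc n)).const_mul _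
  have hnorm : ∀ n : ℕ, (∫ t, ‖F n t‖ ∂(volume.restrict (Set.Ioi 0)))
      = ((n:ℝ)+1) * ((l.factorial:ℝ) / ((n:ℝ)+3)^(l+1)) := by
    intro n
    have heq : ∀ t ∈ Set.Ioi (0:ℝ), ‖F n t‖ = ((n:ℝ)+1) * (t ^ l * Real.exp (-(((n:ℝ)+3) * t))) := by
      intro t ht
      rw [hF]
      simp only [norm_mul, norm_pow, norm_neg, norm_one, one_pow, Real.norm_eq_abs]
      rw [abs_of_pos (by positivity : (0:ℝ) < (n:ℝ)+1),
        abs_of_pos (Set.mem_Ioi.mp ht), abs_of_pos (Real.exp_pos _)]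
      ring
    rw [setIntegral_congr_fun measurableSet_Ioi heq, integral_const_mul, aux_integral l (hc n)]
  have hFsum : Summable (fun n : ℕ => ∫ t, ‖F n t‖ ∂(volume.restrict (Set.Ioi 0))) := by
    rw [show (fun n : ℕ => ∫ t, ‖F n t‖ ∂(volume.restrict (Set.Ioi 0)))
        = fun n : ℕ => ((n:ℝ)+1) * ((l.factorial:ℝ) / ((n:ℝ)+3)^(l+1)) from funext hnorm]
    exact aux_norm_summable l hl
  have hkey := MeasureTheory.integral_tsum_of_summable_integral_norm hFint hFsum
  have hptwise : ∫ t, (∑' n, F n t) ∂(volume.restrict (Set.Ioi 0))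
      = ∫ t in Set.Ioi (0:ℝ), t ^ l * Real.exp (-t) / (1 + Real.exp t) ^ 2 := by
    refine setIntegral_congr_fun measurableSet_Ioi fun t ht => ?_
    exact (aux_pointwise l ht).tsum_eq
  have hint : ∀ n : ℕ, (∫ t, F n t ∂(volume.restrict (Set.Ioi 0)))
      = (-1:ℝ)^n * (((n:ℝ)+1) * ((l.factorial:ℝ) / ((n:ℝ)+3)^(l+1))) := by
    intro n
    rw [hF]
    simp only [mul_assoc]
    rw [integral_const_mul, integral_const_mul, aux_integral l (hc n)]
  rw [← hptwise, ← hkey]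
  -- now series computation
  have hterm : ∀ n : ℕ, (-1:ℝ)^n * (((n:ℝ)+1) * ((l.factorial:ℝ) / ((n:ℝ)+3)^(l+1)))
      = (l.factorial:ℝ) * ((-1:ℝ)^n/((n:ℝ)+3)^l - 2*((-1:ℝ)^n/((n:ℝ)+3)^(l+1))) := by
    intro n
    have h3 : ((n:ℝ)+3) ≠ 0 := ne_of_gt (hc n)
    rw [pow_succ]
    field_simp
    ring
  calc ∑' n, ∫ t, F n t ∂(volume.restrict (Set.Ioi 0))
      = ∑' n : ℕ, (l.factorial:ℝ) * ((-1:ℝ)^n/((n:ℝ)+3)^l - 2*((-1:ℝ)^n/((n:ℝ)+3)^(l+1))) :=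
        tsum_congr fun n => by rw [hint n, hterm n]
    _ = (l.factorial:ℝ) * ∑' n : ℕ, ((-1:ℝ)^n/((n:ℝ)+3)^l - 2*((-1:ℝ)^n/((n:ℝ)+3)^(l+1))) :=
        tsum_mul_left
    _ = (l.factorial:ℝ) * ((∑' n : ℕ, (-1:ℝ)^n/((n:ℝ)+3)^l)
          - 2 * ∑' n : ℕ, (-1:ℝ)^n/((n:ℝ)+3)^(l+1)) := by
        rw [Summable.tsum_sub (aux_T_summable hl) ((aux_T_summable hl1).mul_left 2), tsum_mul_left]
    _ = _ := by
        rw [aux_shift l hl, aux_shift (l+1) hl1, aux_eta l hl, aux_eta (l+1) hl1]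
        have e1 : (2:ℝ)^(-(l:ℤ)) = ((1:ℝ)/2)^l := by
          rw [zpow_neg, zpow_natCast, ← inv_pow, one_div]
        have e2 : (2:ℝ)^((1:ℤ)-(l:ℤ)) = 2 * ((1:ℝ)/2)^l := by
          rw [zpow_sub₀ two_ne_zero, zpow_one, zpow_natCast, div_eq_mul_inv, ← inv_pow, one_div]
        rw [e1, e2]
        ring
end

section
/- For every integer k ≥ 0, the sum ∑_{l=0}^{∞} (-1)^l·l^k·π^{2l}/(2l+1)! is a polynomial in π² of degree at most 2·⌊k/2⌋ with rational coefficients; i.e., there exists p ∈ ℚ[X] with deg p ≤ 2⌊k/2⌋ such that the sum equals p(π²). -/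
open Real

namespace Stmt13Aux

open Polynomial

noncomputable def u (l : ℕ) : ℝ :=
  (-1 : ℝ) ^ l * Real.pi ^ (2 * l) / (Nat.factorial (2 * l + 1) : ℝ)

lemma summable_aux (P : Polynomial ℚ) :
    Summable fun l : ℕ => (aeval (l : ℝ) P) * u l := by
  set d := P.natDegree with hd
  set C : ℝ := ∑ i ∈ Finset.range (d + 1), |((P.coeff i : ℚ) : ℝ)| with hC
  have hsum : Summable fun l : ℕ =>
      C * (((2:ℝ) ^ d * Real.pi ^ 2) ^ l / (Nat.factorial l : ℝ)) :=
    (Real.summable_pow_div_factorial _).mul_left C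
  refine Summable.of_abs (Summable.of_nonneg_of_le (fun l => abs_nonneg _) ?_ hsum)
  intro l
  have hfac : ((Nat.factorial l : ℝ)) ≤ ((Nat.factorial (2 * l + 1) : ℝ)) := by
    exact_mod_cast Nat.factorial_le (by omega)
  have hb : |aeval (l : ℝ) P| ≤ C * ((2:ℝ) ^ d) ^ l := by
    have hev : aeval (l : ℝ) P
        = ∑ i ∈ Finset.range (d + 1), ((P.coeff i : ℚ) : ℝ) * (l : ℝ) ^ i := by
      rw [Polynomial.aeval_eq_sum_range]
      refine Finset.sum_congr rfl fun i _ => ?_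
      rw [Algebra.smul_def]
      norm_num
    rw [hev, hC]
    refine (Finset.abs_sum_le_sum_abs _ _).trans ?_
    rw [Finset.sum_mul]
    refine Finset.sum_le_sum fun i hi => ?_
    rw [abs_mul]
    refine mul_le_mul_of_nonneg_left ?_ (abs_nonneg _)
    have h1 : |(l : ℝ) ^ i| = (l : ℝ) ^ i := abs_of_nonneg (by positivity)
    rw [h1]
    have h2 : (l : ℝ) ^ i ≤ ((l : ℝ) + 1) ^ i := by
      exact pow_le_pow_left₀ (by positivity) (by linarith) i
    have h3 : ((l : ℝ) + 1) ^ i ≤ ((l : ℝ) + 1) ^ d := by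
      refine pow_le_pow_right₀ (by linarith [Nat.cast_nonneg (α := ℝ) l]) ?_
      exact Nat.lt_succ_iff.mp (Finset.mem_range.mp hi)
    have h4 : ((l : ℝ) + 1) ≤ (2 : ℝ) ^ l := by
      exact_mod_cast Nat.lt_two_pow_self
    have h5 : ((l : ℝ) + 1) ^ d ≤ ((2:ℝ) ^ l) ^ d :=
      pow_le_pow_left₀ (by positivity) h4 d
    have h6 : ((2:ℝ) ^ l) ^ d = ((2:ℝ) ^ d) ^ l := by
      rw [← pow_mul, ← pow_mul, mul_comm]
    linarith
  have habs : |aeval (l : ℝ) P * u l|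
      = |aeval (l : ℝ) P| * (Real.pi ^ (2 * l) / (Nat.factorial (2 * l + 1) : ℝ)) := by
    rw [abs_mul]
    congr 1
    rw [u, abs_div, abs_mul, abs_pow, abs_pow, abs_neg, abs_one, one_pow, one_mul,
      abs_of_nonneg Real.pi_pos.le, abs_of_nonneg (by positivity : (0:ℝ) ≤ (Nat.factorial (2*l+1) : ℝ))]
  rw [habs]
  have hq : Real.pi ^ (2 * l) / (Nat.factorial (2 * l + 1) : ℝ)
      ≤ (Real.pi ^ 2) ^ l / (Nat.factorial l : ℝ) := by
    rw [← pow_mul]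
    gcongr <;>
      first
        | positivity
        | exact_mod_cast Nat.factorial_le (by omega)
  calc |aeval (l : ℝ) P| * (Real.pi ^ (2 * l) / (Nat.factorial (2 * l + 1) : ℝ))
      ≤ (C * ((2:ℝ) ^ d) ^ l) * ((Real.pi ^ 2) ^ l / (Nat.factorial l : ℝ)) := by
        refine mul_le_mul hb hq (by positivity) ?_
        have : (0:ℝ) ≤ C := Finset.sum_nonneg fun i _ => abs_nonneg _
        positivity
    _ = C * (((2:ℝ) ^ d * Real.pi ^ 2) ^ l / (Nat.factorial l : ℝ)) := by
        rw [mul_pow]; ring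

lemma hasSum_u : HasSum u 0 := by
  have h := Real.hasSum_sin Real.pi
  rw [Real.sin_pi] at h
  have e : (fun n : ℕ => u n * Real.pi)
      = fun n : ℕ => (-1:ℝ) ^ n * Real.pi ^ (2 * n + 1) / (Nat.factorial (2 * n + 1) : ℝ) := by
    funext n
    rw [u]
    ring
  have h2 : HasSum (fun n : ℕ => u n * Real.pi) 0 := by rw [e]; exact h
  have h3 := h2.mul_right Real.pi⁻¹
  simpa [mul_assoc, mul_inv_cancel₀ Real.pi_ne_zero] using h3

lemma hasSum_c : HasSum (fun l : ℕ => (2 * (l:ℝ) + 1) * u l) (-1) := by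
  have h := Real.hasSum_cos Real.pi
  rw [Real.cos_pi] at h
  have e : (fun l : ℕ => (2 * (l:ℝ) + 1) * u l)
      = fun l : ℕ => (-1:ℝ) ^ l * Real.pi ^ (2 * l) / (Nat.factorial (2 * l) : ℝ) := by
    funext l
    rw [u]
    have hf : ((Nat.factorial (2 * l + 1) : ℕ) : ℝ) = (2 * (l:ℝ) + 1) * (Nat.factorial (2 * l) : ℝ) := by
      rw [Nat.factorial_succ]
      push_cast
      ring
    have h1 : ((Nat.factorial (2 * l) : ℕ) : ℝ) ≠ 0 := by
      exact_mod_cast (Nat.factorial_pos _).ne'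
    have h2 : (2 * (l:ℝ) + 1) ≠ 0 := by positivity
    rw [hf]
    field_simp
  rw [e]
  exact h

lemma hasSum_lu : HasSum (fun l : ℕ => (l : ℝ) * u l) (-(1:ℝ)/2) := by
  have h2 : HasSum (fun l : ℕ => (1/2 : ℝ) * ((2 * (l:ℝ) + 1) * u l - u l)) ((1/2:ℝ) * (-1 - 0)) :=
    (hasSum_c.sub hasSum_u).mul_left _
  convert h2 using 1
  · funext l; ring
  · norm_num

lemma u_shift (l : ℕ) :
    (2 * (l:ℝ) + 2) * (2 * (l:ℝ) + 3) * u (l + 1) = -(Real.pi ^ 2) * u l := by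
  have hfn : Nat.factorial (2 * (l + 1) + 1)
      = Nat.factorial (2 * l + 1) * ((2 * l + 2) * (2 * l + 3)) := by
    rw [show 2 * (l + 1) + 1 = (2 * l + 2) + 1 by ring, Nat.factorial_succ,
      show 2 * l + 2 = (2 * l + 1) + 1 from rfl, Nat.factorial_succ]
    ring
  rw [u, u, hfn]
  have h1 : ((Nat.factorial (2 * l + 1) : ℕ) : ℝ) ≠ 0 := by
    exact_mod_cast (Nat.factorial_pos _).ne'
  have h2 : (2 * (l:ℝ) + 2) ≠ 0 := by positivity
  have h3 : (2 * (l:ℝ) + 3) ≠ 0 := by positivity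
  push_cast
  rw [show 2 * ((l:ℕ) + 1) = 2 * l + 2 by ring, pow_succ (-1 : ℝ) l,
    show Real.pi ^ (2 * l + 2) = Real.pi ^ (2 * l) * Real.pi ^ 2 by rw [← pow_add]]
  field_simp

lemma g_shift (l : ℕ) :
    aeval ((l:ℝ) + 1) ((X : ℚ[X]) ^ 2 + C (1/2 : ℚ) * X) * u (l + 1)
      = -(Real.pi ^ 2) / 4 * u l := by
  have h : aeval ((l:ℝ) + 1) ((X : ℚ[X]) ^ 2 + C (1/2 : ℚ) * X)
      = (2 * (l:ℝ) + 2) * (2 * (l:ℝ) + 3) / 4 := by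
    simp only [map_add, map_mul, map_pow, aeval_X, aeval_C]
    push_cast
    norm_num
    ring
  rw [h]
  linear_combination (u_shift l) / 4

lemma main : ∀ n : ℕ, ∀ P : Polynomial ℚ, P.natDegree ≤ n →
    ∃ p : Polynomial ℚ, p.natDegree ≤ n / 2 ∧
      ∑' l : ℕ, (aeval (l : ℝ) P) * u l = aeval (Real.pi ^ 2) p := by
  intro n
  induction n using Nat.strong_induction_on with
  | _ n ih =>
  intro P hP
  rcases le_or_gt n 1 with hn | hn
  · -- linear case
    have hP1 : P.natDegree ≤ 1 := hP.trans hn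
    set a := P.coeff 1 with ha
    set b := P.coeff 0 with hb
    have hPeq : P = C a * X + C b := eq_X_add_C_of_natDegree_le_one hP1
    have hpt : ∀ l : ℕ, aeval (l : ℝ) P * u l
        = (a:ℝ) * ((l:ℝ) * u l) + (b:ℝ) * u l := by
      intro l
      rw [hPeq]
      simp only [map_add, map_mul, aeval_X, aeval_C, eq_ratCast]
      push_cast
      ring
    have hs : HasSum (fun l : ℕ => aeval (l : ℝ) P * u l)
        ((a:ℝ) * (-(1:ℝ)/2) + (b:ℝ) * 0) := by
      have := (hasSum_lu.mul_left (a:ℝ)).add (hasSum_u.mul_left (b:ℝ))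
      rw [show (fun l : ℕ => aeval (l : ℝ) P * u l) = _ from funext hpt]
      exact this
    refine ⟨C (-a/2), ?_, ?_⟩
    · simp
    · rw [hs.tsum_eq, aeval_C]
      push_cast
      norm_num
      try ring
  · -- n ≥ 2
    set g : ℚ[X] := X ^ 2 + C (1/2 : ℚ) * X with hgdef
    have hg : g.Monic := by
      rw [hgdef]
      monicity!
    have hgdeg : g.natDegree = 2 := by
      rw [hgdef]
      compute_degree!
    set Q : ℚ[X] := P /ₘ g with hQ
    set R : ℚ[X] := P %ₘ g with hR
    have hPQR : R + g * Q = P := modByMonic_add_div P g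
    have hQdeg : Q.natDegree ≤ n - 2 := by
      rw [hQ, natDegree_divByMonic P hg, hgdeg]
      omega
    have hRdeg : R.natDegree ≤ 1 := by
      by_cases hR0 : R = 0
      · simp [hR0]
      · have h1 : R.degree < g.degree := degree_modByMonic_lt P hg
        have h2 : g.degree = ((2:ℕ) : WithBot ℕ) := by
          rw [degree_eq_natDegree hg.ne_zero, hgdeg]
        rw [h2] at h1
        have h3 : R.natDegree < 2 := (natDegree_lt_iff_degree_lt hR0).mpr h1
        omega
    set Q' : ℚ[X] := Q.comp (X + C 1) with hQ'
    have hQ'deg : Q'.natDegree ≤ n - 2 := by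
      rw [hQ', natDegree_comp, natDegree_X_add_C, mul_one]
      exact hQdeg
    obtain ⟨p₁, hp₁d, hp₁s⟩ := ih (n - 2) (by omega) Q' hQ'deg
    obtain ⟨p₂, hp₂d, hp₂s⟩ := ih 1 (by omega) R (hRdeg.trans (by norm_num))
    have keysum : ∑' l : ℕ, aeval (l:ℝ) (g * Q) * u l
        = -(Real.pi ^ 2) / 4 * aeval (Real.pi ^ 2) p₁ := by
      rw [Summable.tsum_eq_zero_add (summable_aux (g * Q))]
      have h0 : aeval ((0:ℕ):ℝ) (g * Q) * u 0 = 0 := by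
        simp [hgdef]
      rw [h0, zero_add]
      have hpt : ∀ l : ℕ, aeval (((l+1:ℕ)):ℝ) (g * Q) * u (l + 1)
          = -(Real.pi ^ 2) / 4 * (aeval (l:ℝ) Q' * u l) := by
        intro l
        have e1 : aeval (((l+1:ℕ)):ℝ) (g * Q)
            = aeval ((l:ℝ) + 1) g * aeval (l:ℝ) Q' := by
          rw [map_mul]
          push_cast
          congr 1
          rw [hQ', aeval_comp]
          simp
        calc aeval (((l+1:ℕ)):ℝ) (g * Q) * u (l + 1)
            = (aeval ((l:ℝ) + 1) g * u (l + 1)) * aeval (l:ℝ) Q' := by rw [e1]; ring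
          _ = -(Real.pi ^ 2) / 4 * (aeval (l:ℝ) Q' * u l) := by
              rw [hgdef, g_shift l]; ring
      rw [tsum_congr hpt, tsum_mul_left, hp₁s]
    refine ⟨p₂ + C (-1/4 : ℚ) * X * p₁, ?_, ?_⟩
    · refine (natDegree_add_le _ _).trans ?_
      have h1 : (C (-1/4 : ℚ) * X * p₁).natDegree ≤ 1 + p₁.natDegree := by
        refine (natDegree_mul_le).trans ?_
        have : (C (-1/4 : ℚ) * X).natDegree ≤ 1 := by
          refine natDegree_mul_le.trans ?_
          simp
        omega
      have h2 : (n - 2) / 2 + 1 ≤ n / 2 := by omega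
      omega
    · have hsplit : ∀ l : ℕ, aeval (l:ℝ) P * u l
          = aeval (l:ℝ) R * u l + aeval (l:ℝ) (g * Q) * u l := by
        intro l
        rw [← hPQR, map_add]
        ring
      rw [tsum_congr hsplit, Summable.tsum_add (summable_aux R) (summable_aux (g * Q)),
        hp₂s, keysum]
      simp only [map_add, map_mul, aeval_C, aeval_X, eq_ratCast]
      push_cast
      norm_num
      ring

end Stmt13Aux

theorem stmt_13 (k : ℕ) :
    ∃ p : Polynomial ℚ, p.natDegree ≤ 2 * (k / 2) ∧
      ∑' l : ℕ, (-1 : ℝ) ^ l * (l : ℝ) ^ k * Real.pi ^ (2 * l) /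
          (Nat.factorial (2 * l + 1) : ℝ)
        = Polynomial.aeval (Real.pi ^ 2) p := by
  obtain ⟨p, hpd, hps⟩ := Stmt13Aux.main k (Polynomial.X ^ k)
    (by simp [Polynomial.natDegree_X_pow])
  refine ⟨p, hpd.trans (by omega), ?_⟩
  rw [← hps]
  refine tsum_congr fun l => ?_
  rw [Stmt13Aux.u, map_pow, Polynomial.aeval_X]
  ring
end

section
/- Let a_0 = 1/2 and a_i = (1-2^{1-2i})ζ(2i) for i ≥ 1. If p(x) is a polynomial of degree m, then p̃(x) = ∑_{i=1}^{∞} (a_{i+1}-a_i)·p(x+i) converges for all x and defines a polynomial of degree m in x; moreover the coefficient of p̃ at x^j equals ∑_{r : j+r ≤ m} C(j+r, j)·b_{j+r}·A(r), where b_k are the coefficients of p and A(r) = ∑_{i=1}^{∞} i^r(a_{i+1}-a_i). -/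
open MeasureTheory Real Filter

/-- `A r = ∑_{i=1}^∞ i^r (a_{i+1} - a_i)`. -/
noncomputable def Asum (r : ℕ) : ℝ :=
  ∑' i : ℕ, ((i : ℝ) + 1) ^ r * (aSeq (i + 2) - aSeq (i + 1))


lemma summable_S (k : ℕ) (hk : 2 ≤ k) :
    Summable (fun n : ℕ => (1 : ℝ) / ((n : ℝ) + 1) ^ k) := by
  have h := (summable_nat_add_iff 1).mpr (Real.summable_one_div_nat_pow.mpr hk)
  exact h.congr (fun n => by push_cast; ring)

lemma summable_S' (k : ℕ) (hk : 2 ≤ k) :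
    Summable (fun n : ℕ => (1 : ℝ) / ((n : ℝ) + 2) ^ k) := by
  have h := (summable_nat_add_iff 1).mpr (summable_S k hk)
  exact h.congr (fun n => by push_cast; ring_nf)

lemma S_zero_val : (∑' n : ℕ, (1 : ℝ) / ((n : ℝ) + 1) ^ 2) = π ^ 2 / 6 := by
  have h := hasSum_zeta_two
  rw [← h.tsum_eq, Summable.tsum_eq_zero_add h.summable]
  push_cast
  norm_num

lemma one_le_S (k : ℕ) (hk : 2 ≤ k) : 1 ≤ ∑' n : ℕ, (1 : ℝ) / ((n : ℝ) + 1) ^ k := by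
  have h := Summable.le_tsum (summable_S k hk) 0 (fun n _ => by positivity)
  simpa using h

lemma S_le (k : ℕ) (hk : 2 ≤ k) :
    (∑' n : ℕ, (1 : ℝ) / ((n : ℝ) + 1) ^ k) ≤ π ^ 2 / 6 := by
  rw [← S_zero_val]
  refine Summable.tsum_le_tsum (fun n => ?_) (summable_S k hk) (summable_S 2 le_rfl)
  gcongr
  norm_num

lemma S_le_two (k : ℕ) (hk : 2 ≤ k) :
    (∑' n : ℕ, (1 : ℝ) / ((n : ℝ) + 1) ^ k) ≤ 2 := by
  refine (S_le k hk).trans ?_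
  nlinarith [pi_lt_d2, pi_pos]

lemma S_lt_two : (∑' n : ℕ, (1 : ℝ) / ((n : ℝ) + 1) ^ 2) < 2 := by
  rw [S_zero_val]
  nlinarith [pi_lt_d2, pi_pos]

lemma S'_le_two (k : ℕ) (hk : 2 ≤ k) :
    (∑' n : ℕ, (1 : ℝ) / ((n : ℝ) + 2) ^ k) ≤ 2 := by
  refine le_trans ?_ (S_le_two k hk)
  refine Summable.tsum_le_tsum (fun n => ?_) (summable_S' k hk) (summable_S k hk)
  gcongr
  norm_num

lemma term_le (i n : ℕ) : (1 : ℝ) / ((n : ℝ) + 2) ^ (2 * (i + 1))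
    ≤ (1/4) ^ i * ((1:ℝ) / ((n : ℝ) + 2) ^ 2) := by
  have hb : (4:ℝ) ≤ ((n:ℝ)+2)^2 := by nlinarith [Nat.cast_nonneg (α := ℝ) n]
  have h2 : (1:ℝ) / ((n:ℝ) + 2) ^ (2 * (i + 1))
      = ((1:ℝ)/(((n:ℝ)+2)^2))^i * ((1:ℝ)/((n:ℝ)+2)^2) := by
    rw [div_pow, one_pow, div_mul_div_comm, one_mul, ← pow_succ, ← pow_mul]
  rw [h2]
  gcongr

lemma S_sub_one (i : ℕ) :
    (∑' n : ℕ, (1 : ℝ) / ((n : ℝ) + 1) ^ (2 * (i + 1))) - 1 ≤ 2 * (1/4) ^ i := by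
  have hs := summable_S (2 * (i + 1)) (by omega)
  have h0 : (∑' n : ℕ, (1 : ℝ) / ((n : ℝ) + 1) ^ (2 * (i + 1)))
      = 1 + ∑' n : ℕ, (1 : ℝ) / ((n : ℝ) + 2) ^ (2 * (i + 1)) := by
    rw [Summable.tsum_eq_zero_add hs]
    push_cast
    norm_num
    exact tsum_congr fun n => by ring_nf
  rw [h0]
  have key : (∑' n : ℕ, (1 : ℝ) / ((n : ℝ) + 2) ^ (2 * (i + 1)))
      ≤ (1/4) ^ i * ∑' n : ℕ, (1:ℝ) / ((n : ℝ) + 2) ^ 2 := by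
    rw [← tsum_mul_left]
    exact Summable.tsum_le_tsum (fun n => term_le i n) (summable_S' _ (by omega))
      ((summable_S' 2 le_rfl).mul_left _)
  have h2 : (1/4:ℝ) ^ i * (∑' n : ℕ, (1:ℝ) / ((n : ℝ) + 2) ^ 2) ≤ (1/4)^i * 2 := by
    gcongr
    exact S'_le_two 2 le_rfl
  linarith

lemma aSeq_sub_one (i : ℕ) : |aSeq (i+1) - 1| ≤ 3 * (1/4) ^ i := by
  have hk : 2 ≤ 2 * (i + 1) := by omega
  set S := ∑' n : ℕ, (1 : ℝ) / ((n : ℝ) + 1) ^ (2 * (i + 1)) with hS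
  have h1 : 1 ≤ S := one_le_S _ hk
  have h2 : S ≤ 2 := S_le_two _ hk
  have h3 : S - 1 ≤ 2 * (1/4) ^ i := S_sub_one i
  have hz : (2:ℝ) ^ ((1 : ℤ) - 2 * ((i : ℤ) + 1)) = 2⁻¹ * (1/4)^i := by
    have h : (1:ℤ) - 2 * ((i:ℤ)+1) = -((2*i+1 : ℕ) : ℤ) := by push_cast; ring
    rw [h, zpow_neg, zpow_natCast, pow_add, pow_mul, mul_inv, mul_comm]
    norm_num
    rw [← inv_pow]
    norm_num
  have ha : aSeq (i+1) = (1 - 2⁻¹ * (1/4)^i) * S := by rw [aSeq, hz]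
  rw [ha]
  have hp : (0:ℝ) ≤ (1/4:ℝ)^i := by positivity
  have hp1 : (1/4:ℝ)^i ≤ 1 := pow_le_one₀ (by norm_num) (by norm_num)
  rw [abs_le]
  constructor <;> nlinarith

lemma d_bound (i : ℕ) : |aSeq (i+2) - aSeq (i+1)| ≤ 4 * (1/4) ^ i := by
  have h1 := aSeq_sub_one i
  have h2 := aSeq_sub_one (i+1)
  have h3 : aSeq (i+2) - aSeq (i+1) = (aSeq (i+2) - 1) - (aSeq (i+1) - 1) := by ring
  rw [h3]
  refine (abs_sub _ _).trans ?_
  have : (1/4:ℝ)^(i+1) = (1/4) * (1/4)^i := by ring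
  rw [this] at h2
  have hp : (0:ℝ) ≤ (1/4:ℝ)^i := by positivity
  linarith

lemma summable_d_pow (r : ℕ) :
    Summable (fun i : ℕ => ((i : ℝ) + 1) ^ r * (aSeq (i + 2) - aSeq (i + 1))) := by
  have hg : Summable (fun n : ℕ => (n : ℝ) ^ r * (1/4 : ℝ) ^ n) :=
    summable_pow_mul_geometric_of_norm_lt_one r (by rw [Real.norm_eq_abs, abs_of_nonneg] <;> norm_num)
  have hg1 : Summable (fun i : ℕ => ((i : ℝ) + 1) ^ r * (1/4 : ℝ) ^ (i+1)) := by
    have := (summable_nat_add_iff 1).mpr hg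
    exact this.congr (fun n => by push_cast; ring)
  have hg2 : Summable (fun i : ℕ => 16 * (((i : ℝ) + 1) ^ r * (1/4 : ℝ) ^ (i+1))) :=
    hg1.mul_left 16
  refine Summable.of_norm (hg2.of_nonneg_of_le (fun i => norm_nonneg _) (fun i => ?_))
  rw [norm_mul, norm_pow, norm_eq_abs, norm_eq_abs]
  have h1 : |(i:ℝ) + 1| = (i:ℝ) + 1 := abs_of_nonneg (by positivity)
  rw [h1]
  have h2 := d_bound i
  have h3 : ((i:ℝ)+1)^r * |aSeq (i+2) - aSeq (i+1)| ≤ ((i:ℝ)+1)^r * (4 * (1/4)^i) := by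
    gcongr
  refine h3.trans ?_
  have : (16:ℝ) * (((i : ℝ) + 1) ^ r * (1/4 : ℝ) ^ (i+1)) = ((i:ℝ)+1)^r * (4 * (1/4)^i) := by
    ring
  rw [this]
lemma Asum_zero : Asum 0 = 1 - aSeq 1 := by
  have hs := summable_d_pow 0
  have hs' : Summable (fun i : ℕ => aSeq (i + 2) - aSeq (i + 1)) :=
    hs.congr (fun i => by simp)
  have h1 : Tendsto (fun N : ℕ => ∑ i ∈ Finset.range N, (aSeq (i+2) - aSeq (i+1)))
      atTop (nhds (∑' i : ℕ, (aSeq (i+2) - aSeq (i+1)))) := hs'.hasSum.tendsto_sum_nat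
  have h2 : ∀ N : ℕ, ∑ i ∈ Finset.range N, (aSeq (i+2) - aSeq (i+1)) = aSeq (N+1) - aSeq 1 :=
    fun N => Finset.sum_range_sub (fun i => aSeq (i+1)) N
  have h3 : Tendsto (fun N : ℕ => aSeq (N+1) - aSeq 1) atTop (nhds (1 - aSeq 1)) := by
    have hl : Tendsto (fun n : ℕ => aSeq (n + 1)) atTop (nhds 1) := by
      have hb : Tendsto (fun n : ℕ => 3 * (1/4:ℝ) ^ n) atTop (nhds 0) := by
        simpa using (tendsto_pow_atTop_nhds_zero_of_lt_one (by norm_num) (by norm_num)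
          (r := (1/4:ℝ))).const_mul 3
      have := squeeze_zero_norm (f := fun n : ℕ => aSeq (n+1) - 1)
        (fun n => by rw [Real.norm_eq_abs]; exact aSeq_sub_one n) hb
      have h4 : Tendsto (fun n : ℕ => (aSeq (n+1) - 1) + 1) atTop (nhds (0 + 1)) :=
        this.add tendsto_const_nhds
      simpa using h4
    exact hl.sub tendsto_const_nhds
  have h5 := tendsto_nhds_unique (h1.congr h2) h3
  have : Asum 0 = ∑' i : ℕ, (aSeq (i+2) - aSeq (i+1)) := by
    rw [Asum]; exact tsum_congr (fun i => by simp)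
  rw [this, h5]

lemma Asum_zero_pos : 0 < Asum 0 := by
  rw [Asum_zero]
  have h : aSeq 1 = (1 - (2:ℝ) ^ ((1 : ℤ) - 2 * ((0 : ℤ) + 1))) *
      ∑' n : ℕ, (1 : ℝ) / ((n : ℝ) + 1) ^ 2 := rfl
  have hz : (1 - (2:ℝ) ^ ((1 : ℤ) - 2 * ((0 : ℤ) + 1))) = 1/2 := by norm_num
  rw [h, hz]
  have h1 := S_lt_two
  linarith

theorem stmt_14 (m : ℕ) (p : Polynomial ℝ) (hp : p.natDegree = m) :
    (∀ x : ℝ, Summable fun i : ℕ =>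
        (aSeq (i + 2) - aSeq (i + 1)) * p.eval (x + ((i : ℝ) + 1))) ∧
    ∃ q : Polynomial ℝ, q.natDegree = m ∧
      (∀ x : ℝ, (∑' i : ℕ, (aSeq (i + 2) - aSeq (i + 1)) * p.eval (x + ((i : ℝ) + 1)))
          = q.eval x) ∧
      ∀ j : ℕ, q.coeff j =
        ∑ r ∈ Finset.range (m - j + 1),
          (Nat.choose (j + r) j : ℝ) * p.coeff (j + r) * Asum r := by
  classical
  set cf : ℕ → ℝ := fun j => ∑ r ∈ Finset.range (m - j + 1),
      (Nat.choose (j + r) j : ℝ) * p.coeff (j + r) * Asum r with hcf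
  set q : Polynomial ℝ := ∑ j ∈ Finset.range (m + 1),
      Polynomial.C (cf j) * Polynomial.X ^ j with hq
  have hcoeff : ∀ j : ℕ, q.coeff j = if j ∈ Finset.range (m + 1) then cf j else 0 := by
    intro j
    rw [hq, Polynomial.finset_sum_coeff]
    simp only [Polynomial.coeff_C_mul, Polynomial.coeff_X_pow, mul_ite, mul_one, mul_zero]
    rw [Finset.sum_ite_eq (Finset.range (m+1)) j cf]
  -- expansion of each term
  have heval : ∀ (x : ℝ) (i : ℕ),
      (aSeq (i + 2) - aSeq (i + 1)) * p.eval (x + ((i : ℝ) + 1)) =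
      ∑ n ∈ Finset.range (m + 1), ∑ j ∈ Finset.range (n + 1),
        (p.coeff n * (Nat.choose n j : ℝ) * x ^ j) *
          (((i : ℝ) + 1) ^ (n - j) * (aSeq (i + 2) - aSeq (i + 1))) := by
    intro x i
    rw [Polynomial.eval_eq_sum_range' (n := m + 1) (by rw [hp]; exact Nat.lt_succ_self m),
      Finset.mul_sum]
    refine Finset.sum_congr rfl (fun n _ => ?_)
    rw [add_pow, Finset.mul_sum, Finset.mul_sum]
    refine Finset.sum_congr rfl (fun j _ => ?_)
    ring
  -- summability
  have hsumm : ∀ x : ℝ, Summable fun i : ℕ =>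
      (aSeq (i + 2) - aSeq (i + 1)) * p.eval (x + ((i : ℝ) + 1)) := by
    intro x
    refine Summable.congr ?_ (fun i => (heval x i).symm)
    refine summable_sum (fun n _ => summable_sum (fun j _ => ?_))
    exact (summable_d_pow (n - j)).mul_left _
  refine ⟨hsumm, q, ?_, ?_, ?_⟩
  · -- natDegree
    have hle : q.natDegree ≤ m := by
      refine Polynomial.natDegree_le_iff_coeff_eq_zero.mpr (fun N hN => ?_)
      rw [hcoeff N, if_neg (by simp only [Finset.mem_range]; omega)]
    rcases Nat.eq_zero_or_pos m with hm | hm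
    · omega
    · have hne : p ≠ 0 := fun h0 => by simp [h0] at hp; omega
      have hlc : p.coeff m ≠ 0 := by
        rw [← hp]
        exact Polynomial.leadingCoeff_ne_zero.mpr hne
      have hqm : q.coeff m ≠ 0 := by
        rw [hcoeff m, if_pos (Finset.mem_range.mpr (Nat.lt_succ_self m)), hcf]
        simp only [Nat.sub_self, zero_add, Finset.range_one, Finset.sum_singleton,
          Nat.add_zero, Nat.choose_self, Nat.cast_one, one_mul]
        exact mul_ne_zero hlc (ne_of_gt Asum_zero_pos)
      exact le_antisymm hle (Polynomial.le_natDegree_of_ne_zero hqm)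
  · -- tsum value
    intro x
    have h1 : (∑' i : ℕ, (aSeq (i + 2) - aSeq (i + 1)) * p.eval (x + ((i : ℝ) + 1)))
        = ∑ n ∈ Finset.range (m + 1), ∑ j ∈ Finset.range (n + 1),
          (p.coeff n * (Nat.choose n j : ℝ) * x ^ j) * Asum (n - j) := by
      rw [tsum_congr (heval x), Summable.tsum_finsetSum
        (fun n _ => summable_sum (fun j _ => (summable_d_pow (n - j)).mul_left _))]
      refine Finset.sum_congr rfl (fun n _ => ?_)
      rw [Summable.tsum_finsetSum (fun j _ => (summable_d_pow (n - j)).mul_left _)]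
      refine Finset.sum_congr rfl (fun j _ => ?_)
      rw [tsum_mul_left, Asum]
    rw [h1]
    -- swap order
    have h2 : (∑ n ∈ Finset.range (m + 1), ∑ j ∈ Finset.range (n + 1),
          (p.coeff n * (Nat.choose n j : ℝ) * x ^ j) * Asum (n - j))
        = ∑ j ∈ Finset.range (m + 1), ∑ n ∈ Finset.Ico j (m + 1),
          (p.coeff n * (Nat.choose n j : ℝ) * x ^ j) * Asum (n - j) := by
      refine Finset.sum_comm' ?_
      intro n j
      simp only [Finset.mem_range, Finset.mem_Ico]
      omega
    rw [h2]
    have h3 : q.eval x = ∑ j ∈ Finset.range (m + 1), cf j * x ^ j := by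
      rw [hq]
      simp [Polynomial.eval_finset_sum]
    rw [h3]
    refine Finset.sum_congr rfl (fun j hj => ?_)
    rw [Finset.sum_Ico_eq_sum_range]
    have hmj : m + 1 - j = m - j + 1 := by
      simp only [Finset.mem_range] at hj; omega
    rw [hmj, hcf, Finset.sum_mul]
    refine Finset.sum_congr rfl (fun r _ => ?_)
    have : j + r - j = r := by omega
    rw [this]
    ring
  · -- coefficients
    intro j
    by_cases h : j ≤ m
    · rw [hcoeff j, if_pos (Finset.mem_range.mpr (by omega))]
    · rw [hcoeff j, if_neg (by simp only [Finset.mem_range]; omega)]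
      have hmj : m - j = 0 := by omega
      rw [hmj, Finset.range_one, Finset.sum_singleton,
        Polynomial.coeff_eq_zero_of_natDegree_lt (by omega)]
      simp
end

section
/- Let s ≥ 2 and a_2, …, a_s ∈ ℝ, and let (c_j)_{j≥1} be a positive sequence with c_j = 1 + a_2/j² + … + a_s/j^s + O(1/j^{s+1}). Then the infinite product C_0 = ∏_{j=1}^∞ c_j converges to a positive real, and there exist b_1, …, b_{s-1} ∈ ℝ such that ∏_{j=1}^{g} c_j = C_0·(1 + b_1/g + … + b_{s-1}/g^{s-1} + O(1/g^s)) as g → ∞. -/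
open Filter Asymptotics Finset

namespace Stmt18

def lowZero (m : ℕ) (q : ℕ → ℝ) : Prop := ∀ i, i < m → q i = 0

noncomputable def poly (n : ℕ) (q : ℕ → ℝ) (g : ℕ) : ℝ := ∑ k ∈ range n, q k / (g:ℝ)^k

def EO (n : ℕ) (q : ℕ → ℝ) (f : ℕ → ℝ) : Prop :=
  (fun g : ℕ => f g - poly n q g) =O[atTop] fun g : ℕ => 1/(g:ℝ)^n

noncomputable def conv (q r : ℕ → ℝ) (k : ℕ) : ℝ := ∑ i ∈ range (k+1), q i * r (k - i)

noncomputable def powc (q : ℕ → ℝ) : ℕ → ℕ → ℝ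
  | 0 => fun k => if k = 0 then 1 else 0
  | (m+1) => conv (powc q m) q

lemma base_isO {m k : ℕ} (h : m ≤ k) :
    (fun g : ℕ => 1/(g:ℝ)^k) =O[atTop] fun g : ℕ => 1/(g:ℝ)^m := by
  apply IsBigO.of_bound 1
  filter_upwards [eventually_ge_atTop 1] with g hg
  have hg1 : (1:ℝ) ≤ (g:ℝ) := by exact_mod_cast hg
  have h1 : (0:ℝ) < (g:ℝ)^m := by positivity
  have h2 : (0:ℝ) < (g:ℝ)^k := by positivity
  rw [norm_div, norm_div, norm_one, one_mul, norm_pow, norm_pow]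
  simp only [Real.norm_natCast]
  exact one_div_le_one_div_of_le h1 (pow_le_pow_right₀ hg1 h)

lemma term_isO {m k : ℕ} (c : ℝ) (h : m ≤ k) :
    (fun g : ℕ => c/(g:ℝ)^k) =O[atTop] fun g : ℕ => 1/(g:ℝ)^m := by
  have : (fun g : ℕ => c/(g:ℝ)^k) = fun g : ℕ => c * (1/(g:ℝ)^k) := by
    funext g; ring
  rw [this]
  exact (base_isO h).const_mul_left c

lemma poly_isO {n m : ℕ} {q : ℕ → ℝ} (hq : lowZero m q) (hm : m ≤ n) :
    (fun g : ℕ => poly n q g) =O[atTop] fun g : ℕ => 1/(g:ℝ)^m := by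
  unfold poly
  apply IsBigO.fun_sum
  intro k hk
  rcases lt_or_ge k m with h | h
  · simp only [hq k h, zero_div]
    exact isBigO_zero _ _
  · exact term_isO _ h

lemma EO_extract {n m : ℕ} {q : ℕ → ℝ} {f : ℕ → ℝ} (hq : lowZero m q) (hm : m ≤ n)
    (h : EO n q f) : f =O[atTop] fun g : ℕ => 1/(g:ℝ)^m := by
  have h1 := (h.trans (base_isO hm)).add (poly_isO hq hm)
  simpa using h1

lemma poly_isO_one {n : ℕ} {q : ℕ → ℝ} :
    (fun g : ℕ => poly n q g) =O[atTop] fun _ : ℕ => (1:ℝ) := by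
  have := poly_isO (q := q) (n := n) (m := 0) (fun i hi => absurd hi (Nat.not_lt_zero i)) (Nat.zero_le n)
  simpa using this

lemma isO_one_of_isO_invpow {n : ℕ} {f : ℕ → ℝ} (h : f =O[atTop] fun g : ℕ => 1/(g:ℝ)^n) :
    f =O[atTop] fun _ : ℕ => (1:ℝ) := by
  have := h.trans (base_isO (Nat.zero_le n))
  simpa using this

lemma EO_isO_one {n : ℕ} {q : ℕ → ℝ} {f : ℕ → ℝ} (h : EO n q f) :
    f =O[atTop] fun _ : ℕ => (1:ℝ) := by
  have h1 := (isO_one_of_isO_invpow h).add (poly_isO_one (n := n) (q := q))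
  simpa using h1

lemma EO_add {n : ℕ} {q r : ℕ → ℝ} {f h : ℕ → ℝ} (hf : EO n q f) (hh : EO n r h) :
    EO n (fun k => q k + r k) (fun g => f g + h g) := by
  have := hf.add hh
  unfold EO poly at *
  simpa [add_div, Finset.sum_add_distrib, sub_add_sub_comm] using this

lemma EO_neg {n : ℕ} {q : ℕ → ℝ} {f : ℕ → ℝ} (hf : EO n q f) :
    EO n (fun k => -q k) (fun g => -f g) := by
  unfold EO poly at *
  have := hf.neg_left
  apply this.congr_left
  intro g
  simp [neg_div, Finset.sum_neg_distrib]
  ring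

lemma EO_sub {n : ℕ} {q r : ℕ → ℝ} {f h : ℕ → ℝ} (hf : EO n q f) (hh : EO n r h) :
    EO n (fun k => q k - r k) (fun g => f g - h g) := by
  have := EO_add hf (EO_neg hh)
  simpa [sub_eq_add_neg] using this

lemma EO_const_mul {n : ℕ} {q : ℕ → ℝ} {f : ℕ → ℝ} (c : ℝ) (hf : EO n q f) :
    EO n (fun k => c * q k) (fun g => c * f g) := by
  unfold EO poly at *
  have := hf.const_mul_left c
  simpa [mul_sub, Finset.mul_sum, mul_div_assoc] using this

lemma EO_of_err {n : ℕ} {q : ℕ → ℝ} {F f : ℕ → ℝ} (hF : EO n q F)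
    (h : (fun g => f g - F g) =O[atTop] fun g : ℕ => 1/(g:ℝ)^n) : EO n q f := by
  unfold EO at *
  have := h.add hF
  simpa using this


lemma EO_trunc {n m : ℕ} {q : ℕ → ℝ} {f : ℕ → ℝ} (hm : m ≤ n) (h : EO n q f) :
    EO m q f := by
  unfold EO poly at *
  have hsplit : ∀ g : ℕ, f g - ∑ k ∈ range m, q k / (g:ℝ)^k =
      (f g - ∑ k ∈ range n, q k / (g:ℝ)^k) + ∑ k ∈ Ico m n, q k / (g:ℝ)^k := by
    intro g
    rw [range_eq_Ico, range_eq_Ico, ← Finset.sum_Ico_consecutive _ (Nat.zero_le m) hm, ← range_eq_Ico]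
    ring
  have h2 : (fun g : ℕ => ∑ k ∈ Ico m n, q k / (g:ℝ)^k) =O[atTop] fun g : ℕ => 1/(g:ℝ)^m := by
    apply IsBigO.fun_sum
    intro k hk
    exact term_isO _ (Finset.mem_Ico.mp hk).1
  have := (h.trans (base_isO hm)).add h2
  apply this.congr_left
  intro g
  exact (hsplit g).symm

lemma tri_reindex (n : ℕ) (F : ℕ → ℕ → ℝ) :
    ∑ K ∈ range n, ∑ i ∈ range (K+1), F i (K - i)
      = ∑ p ∈ (range n ×ˢ range n).filter (fun p => p.1 + p.2 < n), F p.1 p.2 := by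
  rw [Finset.sum_sigma']
  apply Finset.sum_nbij' (i := fun p => (p.2, p.1 - p.2)) (j := fun p => ⟨p.1 + p.2, p.1⟩)
  · intro p hp
    simp only [Finset.mem_sigma, Finset.mem_range] at hp
    simp only [Finset.mem_filter, Finset.mem_product, Finset.mem_range]
    obtain ⟨h1, h2⟩ := hp
    have h3 : p.2 ≤ p.1 := Nat.lt_succ_iff.mp h2
    refine ⟨⟨lt_of_le_of_lt h3 h1, lt_of_le_of_lt (Nat.sub_le _ _) h1⟩, ?_⟩
    omega
  · intro p hp
    simp only [Finset.mem_filter, Finset.mem_product, Finset.mem_range] at hp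
    simp only [Finset.mem_sigma, Finset.mem_range]
    omega
  · intro p hp
    simp only [Finset.mem_sigma, Finset.mem_range] at hp
    have h3 : p.2 ≤ p.1 := Nat.lt_succ_iff.mp hp.2
    ext <;> simp <;> omega
  · intro p hp
    simp
  · intro p hp
    simp only [Finset.mem_sigma, Finset.mem_range] at hp
    rfl

lemma lowZero_conv {m m' : ℕ} {q r : ℕ → ℝ} (hq : lowZero m q) (hr : lowZero m' r) :
    lowZero (m + m') (conv q r) := by
  intro k hk
  unfold conv
  apply Finset.sum_eq_zero
  intro i hi
  have hik := Finset.mem_range.mp hi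
  rcases lt_or_ge i m with h | h
  · rw [hq i h, zero_mul]
  · have : k - i < m' := by omega
    rw [hr _ this, mul_zero]

lemma lowZero_powc {m : ℕ} {q : ℕ → ℝ} (hq : lowZero m q) :
    ∀ j, lowZero (m * j) (powc q j) := by
  intro j
  induction j with
  | zero => intro i hi; omega
  | succ j ih =>
      have h2 := lowZero_conv ih hq
      have e : m * (j+1) = m * j + m := by ring
      intro i hi
      exact h2 i (by omega)

lemma EO_mul {n : ℕ} {q r : ℕ → ℝ} {f h : ℕ → ℝ} (hf : EO n q f) (hh : EO n r h) :
    EO n (conv q r) (fun g => f g * h g) := by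
  have hfO : f =O[atTop] fun _ : ℕ => (1:ℝ) := EO_isO_one hf
  have hPrO : (fun g : ℕ => poly n r g) =O[atTop] fun _ : ℕ => (1:ℝ) := poly_isO_one
  have t1 : (fun g : ℕ => f g * (h g - poly n r g)) =O[atTop] fun g : ℕ => 1/(g:ℝ)^n := by
    have := hfO.mul hh
    simpa only [one_mul] using this
  have t2 : (fun g : ℕ => (f g - poly n q g) * poly n r g) =O[atTop] fun g : ℕ => 1/(g:ℝ)^n := by
    have := hf.mul hPrO
    simpa only [mul_one] using this
  -- the polynomial part
  have hid : ∀ g : ℕ, poly n q g * poly n r g - poly n (conv q r) g =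
      ∑ p ∈ (range n ×ˢ range n).filter (fun p => ¬ p.1 + p.2 < n),
        q p.1 * r p.2 / (g:ℝ)^(p.1+p.2) := by
    intro g
    have e1 : poly n q g * poly n r g =
        ∑ p ∈ range n ×ˢ range n, q p.1 * r p.2 / (g:ℝ)^(p.1+p.2) := by
      unfold poly
      rw [Finset.sum_mul_sum]
      rw [Finset.sum_product]
      congr 1; funext i; congr 1; funext j
      rw [pow_add]; field_simp
    have e2 : poly n (conv q r) g =
        ∑ p ∈ (range n ×ˢ range n).filter (fun p => p.1 + p.2 < n),
          q p.1 * r p.2 / (g:ℝ)^(p.1+p.2) := by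
      unfold poly conv
      rw [← tri_reindex n (fun i j => q i * r j / (g:ℝ)^(i+j))]
      congr 1; funext K
      rw [Finset.sum_div]
      apply Finset.sum_congr rfl
      intro i hi
      have : i + (K - i) = K := by
        have := Nat.lt_succ_iff.mp (Finset.mem_range.mp hi); omega
      rw [this]
    rw [e1, e2, ← Finset.sum_filter_add_sum_filter_not (range n ×ˢ range n)
      (fun p => p.1 + p.2 < n) (fun p => q p.1 * r p.2 / (g:ℝ)^(p.1+p.2))]
    ring
  have t3 : (fun g : ℕ => poly n q g * poly n r g - poly n (conv q r) g)
      =O[atTop] fun g : ℕ => 1/(g:ℝ)^n := by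
    have : (fun g : ℕ => ∑ p ∈ (range n ×ˢ range n).filter (fun p => ¬ p.1 + p.2 < n),
        q p.1 * r p.2 / (g:ℝ)^(p.1+p.2)) =O[atTop] fun g : ℕ => 1/(g:ℝ)^n := by
      apply IsBigO.fun_sum
      intro p hp
      simp only [Finset.mem_filter, not_lt] at hp
      exact term_isO _ hp.2
    apply this.congr_left
    intro g
    exact (hid g).symm
  have tot := (t1.add t2).add t3
  unfold EO
  apply tot.congr_left
  intro g
  ring

lemma EO_pow {n : ℕ} (hn : 1 ≤ n) {q : ℕ → ℝ} {f : ℕ → ℝ} (h : EO n q f) :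
    ∀ m, EO n (powc q m) (fun g => f g ^ m) := by
  intro m
  induction m with
  | zero =>
      unfold EO powc poly
      have : ∀ g : ℕ, f g ^ 0 - ∑ k ∈ range n, (if k = 0 then (1:ℝ) else 0) / (g:ℝ)^k = 0 := by
        intro g
        have hsum : ∑ k ∈ range n, (if k = 0 then (1:ℝ) else 0) / (g:ℝ)^k = 1 := by
          rw [Finset.sum_eq_single_of_mem 0 (Finset.mem_range.mpr (by omega))]
          · simp
          · intro k _ hk; simp [hk]
        rw [hsum]; simp
      have h0 : (fun g : ℕ => f g ^ 0 - ∑ k ∈ range n, (if k = 0 then (1:ℝ) else 0) / (g:ℝ)^k)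
          = fun _ => (0:ℝ) := funext this
      rw [h0]
      exact isBigO_zero _ _
  | succ m ih =>
      have := EO_mul ih h
      unfold EO at *
      apply this.congr_left
      intro g
      simp only [pow_succ, powc]

lemma EO_finsum {n : ℕ} {S : Finset ℕ} {Q : ℕ → ℕ → ℝ} {F : ℕ → ℕ → ℝ}
    (h : ∀ m ∈ S, EO n (Q m) (F m)) :
    EO n (fun j => ∑ m ∈ S, Q m j) (fun g => ∑ m ∈ S, F m g) := by
  unfold EO poly at *
  have hsw : ∀ g : ℕ, ∑ k ∈ range n, (∑ m ∈ S, Q m k) / (g:ℝ)^k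
      = ∑ m ∈ S, ∑ k ∈ range n, Q m k / (g:ℝ)^k := by
    intro g
    rw [Finset.sum_comm]
    congr 1; funext k
    rw [Finset.sum_div]
  have : (fun g : ℕ => ∑ m ∈ S, (F m g - ∑ k ∈ range n, Q m k / (g:ℝ)^k))
      =O[atTop] fun g : ℕ => 1/(g:ℝ)^n := IsBigO.fun_sum h
  apply this.congr_left
  intro g
  rw [Finset.sum_sub_distrib, hsw g]


lemma step_ineq {n : ℕ} (hn : 1 ≤ n) (x : ℝ) (hx : 2 ≤ x) :
    1/x^(n+1) ≤ 1/((n:ℝ)*(x-1)^n) - 1/((n:ℝ)*x^n) := by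
  set y : ℝ := x - 1 with hy
  have hy1 : 1 ≤ y := by simp [hy]; linarith
  have hy0 : 0 < y := by linarith
  have hx0 : 0 < x := by linarith
  have hyx : y ≤ x := by linarith
  have hn0 : (0:ℝ) < (n:ℝ) := by exact_mod_cast hn
  have hgeom : x^n - y^n = (∑ i ∈ range n, x^i * y^(n-1-i)) * (x - y) :=
    (geom_sum₂_mul x y n).symm
  have hxy1 : x - y = 1 := by simp [hy]
  have hsum : (n:ℝ) * y^(n-1) ≤ ∑ i ∈ range n, x^i * y^(n-1-i) := by
    have : (n:ℝ) * y^(n-1) = ∑ _i ∈ range n, y^(n-1) := by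
      rw [Finset.sum_const, card_range, nsmul_eq_mul]
    rw [this]
    apply Finset.sum_le_sum
    intro i hi
    have hi' : i ≤ n - 1 := by have := Finset.mem_range.mp hi; omega
    have e : i + (n-1-i) = n - 1 := by omega
    calc y^(n-1) = y^i * y^(n-1-i) := by rw [← pow_add, e]
      _ ≤ x^i * y^(n-1-i) := by
          apply mul_le_mul_of_nonneg_right (pow_le_pow_left₀ hy0.le hyx i) (by positivity)
  have key : (n:ℝ) * y^(n-1) ≤ x^n - y^n := by
    rw [hgeom, hxy1, mul_one]; exact hsum
  have hyn : y^n = y^(n-1) * y := by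
    conv_lhs => rw [show n = (n-1)+1 by omega]
    rw [pow_succ]
  rw [div_sub_div _ _ (by positivity) (by positivity), div_le_div_iff₀ (by positivity) (by positivity), one_mul]
  calc (n:ℝ)*y^n * ((n:ℝ)*x^n) = ((n:ℝ)^2 * (y^(n-1) * x^n)) * y := by rw [hyn]; ring
    _ ≤ ((n:ℝ)^2 * (y^(n-1) * x^n)) * x := by
        apply mul_le_mul_of_nonneg_left hyx (by positivity)
    _ = ((n:ℝ) * y^(n-1)) * ((n:ℝ) * x^(n+1)) := by rw [pow_succ]; ring
    _ ≤ (x^n - y^n) * ((n:ℝ) * x^(n+1)) := by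
        apply mul_le_mul_of_nonneg_right key (by positivity)
    _ = (1*((n:ℝ)*x^n) - (n:ℝ)*y^n*1) * x^(n+1) := by ring

lemma telescope {n : ℕ} (hn : 1 ≤ n) {f : ℕ → ℝ} (hf0 : Tendsto f atTop (nhds 0))
    (hΔ : (fun g : ℕ => f g - f (g+1)) =O[atTop] fun g : ℕ => 1/(g:ℝ)^(n+1)) :
    f =O[atTop] fun g : ℕ => 1/(g:ℝ)^n := by
  obtain ⟨C, hC, hbd⟩ := hΔ.exists_pos
  rw [isBigOWith_iff] at hbd
  obtain ⟨G, hG⟩ := eventually_atTop.mp hbd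
  have hn0 : (0:ℝ) < (n:ℝ) := by exact_mod_cast hn
  apply IsBigO.of_bound (C * 2^n / n)
  filter_upwards [eventually_ge_atTop (max G 2)] with g hg
  have hgG : G ≤ g := le_trans (le_max_left _ _) hg
  have hg2 : 2 ≤ g := le_trans (le_max_right _ _) hg
  have hg2R : (2:ℝ) ≤ (g:ℝ) := by exact_mod_cast hg2
  set w : ℕ → ℝ := fun k => 1/((n:ℝ)*(((g:ℝ)+(k:ℝ))-1)^n) with hw
  have hwnonneg : ∀ K, 0 ≤ w K := by
    intro K
    apply div_nonneg zero_le_one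
    have : (1:ℝ) ≤ (g:ℝ) + (K:ℝ) - 1 := by
      have : (0:ℝ) ≤ (K:ℝ) := Nat.cast_nonneg K
      linarith
    positivity
  set B : ℝ := C / ((n:ℝ) * ((g:ℝ)-1)^n) with hB
  have hwB : C * w 0 = B := by
    simp [hw, hB, div_eq_mul_inv]
  have key : ∀ K : ℕ, |f g - f (g+K)| ≤ B := by
    intro K
    have tele : f g - f (g+K) = ∑ k ∈ range K, (f (g+k) - f (g+(k+1))) := by
      rw [Finset.sum_range_sub' (fun k => f (g+k)) K]
      norm_num
    rw [tele]
    refine le_trans (Finset.abs_sum_le_sum_abs _ _) ?_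
    have hterm : ∀ k ∈ range K, |f (g+k) - f (g+(k+1))| ≤ C * (w k - w (k+1)) := by
      intro k _
      have hj2 : 2 ≤ g + k := by omega
      have hjR : (2:ℝ) ≤ ((g+k : ℕ):ℝ) := by exact_mod_cast hj2
      have hb := hG (g+k) (by omega)
      have hnorm : ‖(1:ℝ)/((g+k:ℕ):ℝ)^(n+1)‖ = 1/((g+k:ℕ):ℝ)^(n+1) := by
        rw [Real.norm_eq_abs, abs_of_nonneg (by positivity)]
      rw [hnorm] at hb
      have hstep := step_ineq hn ((g+k:ℕ):ℝ) hjR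
      have hcast : ((g+k:ℕ):ℝ) = (g:ℝ) + (k:ℝ) := by push_cast; ring
      have hww : 1/((n:ℝ)*(((g+k:ℕ):ℝ)-1)^n) - 1/((n:ℝ)*((g+k:ℕ):ℝ)^n) = w k - w (k+1) := by
        simp only [hw, hcast]
        push_cast
        ring_nf
      have h2 : (1:ℝ)/((g+k:ℕ):ℝ)^(n+1) ≤ w k - w (k+1) := by
        rw [← hww]; exact hstep
      calc |f (g+k) - f (g+(k+1))| = ‖f (g+k) - f ((g+k)+1)‖ := by
            rw [Real.norm_eq_abs, Nat.add_assoc]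
        _ ≤ C * (1/((g+k:ℕ):ℝ)^(n+1)) := hb
        _ ≤ C * (w k - w (k+1)) := by
            apply mul_le_mul_of_nonneg_left h2 hC.le
    refine le_trans (Finset.sum_le_sum hterm) ?_
    rw [← Finset.mul_sum, Finset.sum_range_sub' w K]
    calc C * (w 0 - w K) ≤ C * w 0 := by
          apply mul_le_mul_of_nonneg_left _ hC.le
          have := hwnonneg K; linarith
      _ = B := hwB
  have hcomp : Tendsto (fun K : ℕ => g + K) atTop atTop := by
    have e : (fun K : ℕ => g + K) = fun K => K + g := funext fun K => Nat.add_comm g K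
    rw [e]
    exact tendsto_add_atTop_nat g
  have h1 : Tendsto (fun K : ℕ => |f g - f (g+K)|) atTop (nhds |f g - 0|) :=
    ((tendsto_const_nhds.sub (hf0.comp hcomp)).abs)
  have hfgB : |f g| ≤ B := by
    have := le_of_tendsto h1 (Eventually.of_forall key)
    simpa using this
  have hgpos : (0:ℝ) < (g:ℝ) := by linarith
  have hnormg : ‖(1:ℝ)/(g:ℝ)^n‖ = 1/(g:ℝ)^n := by
    rw [Real.norm_eq_abs, abs_of_nonneg (by positivity)]
  rw [Real.norm_eq_abs, hnormg]
  refine le_trans hfgB ?_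
  have hhalf : ((g:ℝ)/2)^n ≤ ((g:ℝ)-1)^n := by
    apply pow_le_pow_left₀ (by positivity) (by linarith)
  have hBle : B ≤ C / ((n:ℝ) * ((g:ℝ)/2)^n) := by
    apply div_le_div_of_nonneg_left hC.le (by positivity)
    apply mul_le_mul_of_nonneg_left hhalf hn0.le
  refine le_trans hBle (le_of_eq ?_)
  rw [div_pow]
  field_simp

def rseq : ℕ → ℝ := fun k => if k = 0 then 0 else (-1:ℝ)^(k-1)

lemma lowZero_rseq : lowZero 1 rseq := by
  intro i hi
  have : i = 0 := by omega
  simp [rseq, this]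

lemma geom_id (g : ℝ) (hg : 1 ≤ g) : ∀ N, 1 ≤ N →
    1/(g+1) - ∑ k ∈ range N, rseq k / g^k = (-1:ℝ)^(N-1) / (g^(N-1) * (g+1)) := by
  have hg0 : g ≠ 0 := by linarith
  have hg1 : g + 1 ≠ 0 := by linarith
  intro N
  induction N with
  | zero => omega
  | succ N ih =>
      intro _
      rcases Nat.eq_zero_or_pos N with h0 | hpos
      · subst h0
        simp [rseq]
      · obtain ⟨M, rfl⟩ : ∃ M, N = M + 1 := ⟨N-1, by omega⟩
        rw [Finset.sum_range_succ, sub_add_eq_sub_sub, ih (by omega)]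
        have e1 : M + 1 - 1 = M := by omega
        have e2 : M + 1 + 1 - 1 = M + 1 := by omega
        rw [e1, e2]
        have hr : rseq (M+1) = (-1:ℝ)^M := by simp [rseq]
        rw [hr, pow_succ, pow_succ]
        field_simp
        ring

lemma geom_EO {N : ℕ} (hN : 1 ≤ N) : EO N rseq (fun g : ℕ => 1/((g:ℝ)+1)) := by
  apply IsBigO.of_bound 1
  filter_upwards [eventually_ge_atTop 1] with g hg
  have hg1 : (1:ℝ) ≤ (g:ℝ) := by exact_mod_cast hg
  have hid := geom_id (g:ℝ) hg1 N hN
  unfold poly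
  rw [hid, one_mul]
  rw [Real.norm_eq_abs, Real.norm_eq_abs, abs_div, abs_pow, abs_neg, abs_one, one_pow,
    abs_of_nonneg (by positivity : (0:ℝ) ≤ (g:ℝ)^(N-1) * ((g:ℝ)+1)),
    abs_of_nonneg (by positivity : (0:ℝ) ≤ 1/(g:ℝ)^N)]
  apply div_le_div_of_nonneg_left zero_le_one (by positivity)
  calc (g:ℝ)^N = (g:ℝ)^(N-1) * (g:ℝ) := by
        conv_lhs => rw [show N = (N-1)+1 by omega]
        rw [pow_succ]
    _ ≤ (g:ℝ)^(N-1) * ((g:ℝ)+1) := by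
        apply mul_le_mul_of_nonneg_left (by linarith) (by positivity)

lemma sigma_facts : ∀ j : ℕ, lowZero j (powc rseq j) ∧ powc rseq j j = 1 ∧
    powc rseq j (j+1) = -(j:ℝ) := by
  intro j
  induction j with
  | zero =>
      refine ⟨fun i hi => absurd hi (Nat.not_lt_zero i), by simp [powc], by simp [powc]⟩
  | succ j ih =>
      obtain ⟨hlz, hj, hj1⟩ := ih
      have hlz' : lowZero (j+1) (powc rseq (j+1)) := by
        have := lowZero_conv hlz lowZero_rseq
        exact this
      refine ⟨hlz', ?_, ?_⟩
      · show conv (powc rseq j) rseq (j+1) = 1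
        unfold conv
        rw [Finset.sum_range_succ, Finset.sum_range_succ]
        have h0 : ∑ i ∈ range j, powc rseq j i * rseq (j+1-i) = 0 :=
          Finset.sum_eq_zero (fun i hi => by rw [hlz i (Finset.mem_range.mp hi), zero_mul])
        rw [h0]
        have e1 : j + 1 - j = 1 := by omega
        have e2 : j + 1 - (j+1) = 0 := by omega
        rw [e1, e2, hj, hj1]
        simp [rseq]
      · push_cast
        show conv (powc rseq j) rseq (j+2) = -((j:ℝ)+1)
        unfold conv
        rw [Finset.sum_range_succ, Finset.sum_range_succ, Finset.sum_range_succ]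
        have h0 : ∑ i ∈ range j, powc rseq j i * rseq (j+2-i) = 0 :=
          Finset.sum_eq_zero (fun i hi => by rw [hlz i (Finset.mem_range.mp hi), zero_mul])
        rw [h0]
        have e1 : j + 2 - j = 2 := by omega
        have e2 : j + 2 - (j+1) = 1 := by omega
        have e3 : j + 2 - (j+2) = 0 := by omega
        rw [e1, e2, e3, hj, hj1]
        simp [rseq]

lemma h_expansion {N j : ℕ} (hN : 1 ≤ N) (hj : 1 ≤ j) (hjN : j < N) :
    ∃ e' : ℕ → ℝ, EO N e' (fun g : ℕ => 1/(g:ℝ)^j - 1/((g:ℝ)+1)^j) ∧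
      lowZero (j+1) e' ∧ e' (j+1) = (j:ℝ) := by
  obtain ⟨hlz, hjj, hjj1⟩ := sigma_facts j
  refine ⟨fun i => (if i = j then (1:ℝ) else 0) - powc rseq j i, ?_, ?_, ?_⟩
  · have h1 : EO N (fun i => if i = j then (1:ℝ) else 0) (fun g : ℕ => 1/(g:ℝ)^j) := by
      unfold EO poly
      have : ∀ g : ℕ, 1/(g:ℝ)^j - ∑ k ∈ range N, (if k = j then (1:ℝ) else 0) / (g:ℝ)^k = 0 := by
        intro g
        have hsum : ∑ k ∈ range N, (if k = j then (1:ℝ) else 0) / (g:ℝ)^k = 1/(g:ℝ)^j := by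
          rw [Finset.sum_eq_single_of_mem j (Finset.mem_range.mpr hjN)]
          · simp
          · intro k _ hk; simp [hk]
        rw [hsum]; ring
      have h0 : (fun g : ℕ => 1/(g:ℝ)^j - ∑ k ∈ range N, (if k = j then (1:ℝ) else 0) / (g:ℝ)^k)
          = fun _ => (0:ℝ) := funext this
      rw [h0]
      exact isBigO_zero _ _
    have h2 : EO N (powc rseq j) (fun g : ℕ => 1/((g:ℝ)+1)^j) := by
      have := EO_pow hN (geom_EO hN) j
      unfold EO at *
      apply this.congr_left
      intro g
      simp only [one_div_pow]
    exact EO_sub h1 h2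
  · intro i hi
    show (if i = j then (1:ℝ) else 0) - powc rseq j i = 0
    rcases lt_or_eq_of_le (Nat.lt_succ_iff.mp hi) with h | h
    · rw [hlz i h, if_neg (by omega), sub_zero]
    · subst h
      rw [if_pos rfl, hjj, sub_self]
  · show (if j + 1 = j then (1:ℝ) else 0) - powc rseq j (j+1) = (j:ℝ)
    rw [if_neg (by omega), hjj1]
    ring


lemma succ_isO_succ {N : ℕ} {F : ℕ → ℝ} (h : F =O[atTop] fun g : ℕ => 1/(g:ℝ)^N) :
    (fun g : ℕ => F (g+1)) =O[atTop] fun g : ℕ => 1/(g:ℝ)^N := by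
  have h1 := h.comp_tendsto (tendsto_add_atTop_nat 1)
  refine IsBigO.trans h1 ?_
  apply IsBigO.of_bound 1
  filter_upwards [eventually_ge_atTop 1] with g hg
  have hg1 : (1:ℝ) ≤ (g:ℝ) := by exact_mod_cast hg
  have hc : ((g:ℝ)) ≤ ((g+1:ℕ):ℝ) := by push_cast; linarith
  simp only [Function.comp]
  rw [Real.norm_eq_abs, Real.norm_eq_abs, abs_of_nonneg (by positivity),
    abs_of_nonneg (by positivity), one_mul]
  apply one_div_le_one_div_of_le (by positivity)
  exact pow_le_pow_left₀ (by positivity) hc N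

lemma shift_lowZero {N m : ℕ} {q : ℕ → ℝ} (hq : lowZero m q) :
    lowZero m (fun i => ∑ k ∈ range N, q k * powc rseq k i) := by
  intro i hi
  apply Finset.sum_eq_zero
  intro k _
  rcases lt_or_ge k m with h | h
  · rw [hq k h, zero_mul]
  · rw [(sigma_facts k).1 i (lt_of_lt_of_le hi h), mul_zero]

lemma EO_shift {N : ℕ} (hN : 1 ≤ N) {q : ℕ → ℝ} {f : ℕ → ℝ} (h : EO N q f) :
    EO N (fun i => ∑ k ∈ range N, q k * powc rseq k i) (fun g => f (g+1)) := by
  have herr : (fun g : ℕ => f (g+1) - poly N q (g+1)) =O[atTop] fun g : ℕ => 1/(g:ℝ)^N :=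
    succ_isO_succ (N := N) (F := fun g => f g - poly N q g) h
  have hsum : EO N (fun i => ∑ k ∈ range N, q k * powc rseq k i)
      (fun g => ∑ k ∈ range N, q k * (1/((g:ℝ)+1))^k) := by
    apply EO_finsum
    intro k _
    exact EO_const_mul (q k) (EO_pow hN (geom_EO hN) k)
  apply EO_of_err hsum
  have hpoly : ∀ g : ℕ, poly N q (g+1) = ∑ k ∈ range N, q k * (1/((g:ℝ)+1))^k := by
    intro g
    unfold poly
    apply Finset.sum_congr rfl
    intro k _
    rw [one_div_pow, mul_one_div]
    push_cast
    ring_nf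
  apply herr.congr_left
  intro g
  rw [hpoly g]

lemma tendsto_const_div_pow (c : ℝ) (j : ℕ) (hj : 1 ≤ j) :
    Tendsto (fun g : ℕ => c/(g:ℝ)^j) atTop (nhds 0) := by
  have h1 : Tendsto (fun g : ℕ => (g:ℝ)^j) atTop atTop :=
    Tendsto.comp (tendsto_pow_atTop (by omega)) tendsto_natCast_atTop_atTop
  exact tendsto_const_nhds.div_atTop h1

lemma solve_base {n : ℕ} (hn : 1 ≤ n) {m : ℕ} (hm : n + 1 ≤ m) {f e : ℕ → ℝ}
    (hf0 : Tendsto f atTop (nhds 0)) (hlz : lowZero m e)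
    (hEO : EO (n+1) e (fun g => f g - f (g+1))) :
    ∃ t, lowZero 1 t ∧ EO n t f := by
  have hpoly0 : ∀ g : ℕ, poly (n+1) e g = 0 := by
    intro g
    unfold poly
    apply Finset.sum_eq_zero
    intro i hi
    rw [hlz i (lt_of_lt_of_le (Finset.mem_range.mp hi) hm), zero_div]
  have hΔ : (fun g : ℕ => f g - f (g+1)) =O[atTop] fun g : ℕ => 1/(g:ℝ)^(n+1) := by
    unfold EO at hEO
    apply hEO.congr_left
    intro g
    rw [hpoly0 g, sub_zero]
  have hO := telescope hn hf0 hΔ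
  refine ⟨fun _ => 0, fun i _ => rfl, ?_⟩
  unfold EO poly
  have : ∀ g : ℕ, f g - ∑ k ∈ range n, (0:ℝ) / (g:ℝ)^k = f g := by
    intro g; simp
  apply hO.congr_left
  intro g
  exact (this g).symm

lemma solveC {n : ℕ} (hn : 1 ≤ n) :
    ∀ (k m : ℕ), m + k = n + 2 → 2 ≤ m →
    ∀ (f e : ℕ → ℝ), Tendsto f atTop (nhds 0) → lowZero m e →
      EO (n+1) e (fun g => f g - f (g+1)) →
      ∃ t, lowZero 1 t ∧ EO n t f := by
  intro k
  induction k with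
  | zero =>
      intro m hm h2 f e hf0 hlz hEO
      exact solve_base hn (by omega) hf0 hlz hEO
  | succ k ih =>
      intro m hm h2 f e hf0 hlz hEO
      rcases le_or_gt (n+1) m with hbig | hsmall
      · exact solve_base hn hbig hf0 hlz hEO
      · set j := m - 1 with hjdef
        have hj1 : 1 ≤ j := by omega
        have hjm : j + 1 = m := by omega
        have hjn : j < n := by omega
        obtain ⟨e', hEOh, hlzh, hval⟩ := h_expansion (N := n+1) (by omega) hj1 (by omega)
        rw [hjm] at hlzh hval
        have hjR : ((j:ℝ)) ≠ 0 := by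
          simp only [ne_eq, Nat.cast_eq_zero]; omega
        set c0 := e m / (j:ℝ) with hc0
        set f₁ : ℕ → ℝ := fun g => f g - c0 / (g:ℝ)^j with hf₁
        have hf₁0 : Tendsto f₁ atTop (nhds 0) := by
          have h1 := tendsto_const_div_pow c0 j hj1
          have := hf0.sub h1
          simpa using this
        have hΔ₁ : EO (n+1) (fun i => e i - c0 * e' i) (fun g => f₁ g - f₁ (g+1)) := by
          have hcomb := EO_sub hEO (EO_const_mul c0 hEOh)
          have hstep : ∀ g : ℕ, (f g - f (g+1)) - c0 * (1/(g:ℝ)^j - 1/((g:ℝ)+1)^j)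
              = f₁ g - f₁ (g+1) := by
            intro g
            simp only [hf₁]
            push_cast
            ring
          unfold EO at hcomb ⊢
          apply hcomb.congr_left
          intro g
          show (f g - f (g+1) - c0 * (1/(g:ℝ)^j - 1/((g:ℝ)+1)^j))
              - poly (n+1) (fun k => e k - c0 * e' k) g
            = (f₁ g - f₁ (g+1)) - poly (n+1) (fun k => e k - c0 * e' k) g
          rw [hstep g]
        have hlz₁ : lowZero (m+1) (fun i => e i - c0 * e' i) := by
          intro i hi
          show e i - c0 * e' i = 0
          rcases lt_or_ge i m with h | h
          · rw [hlz i h, hlzh i h, mul_zero, sub_zero]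
          · have : i = m := by omega
            subst this
            rw [hval, hc0]
            field_simp
            ring
        obtain ⟨t₁, ht₁lz, ht₁⟩ := ih (m+1) (by omega) (by omega) f₁ _ hf₁0 hlz₁ hΔ₁
        refine ⟨fun i => t₁ i + (if i = j then c0 else 0), ?_, ?_⟩
        · intro i hi
          have hi0 : i = 0 := by omega
          subst hi0
          show t₁ 0 + (if 0 = j then c0 else 0) = 0
          rw [ht₁lz 0 (by omega), if_neg (by omega)]
          ring
        · unfold EO poly at ht₁ ⊢
          have hpoly : ∀ g : ℕ, ∑ k ∈ range n, (t₁ k + (if k = j then c0 else 0)) / (g:ℝ)^k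
              = (∑ k ∈ range n, t₁ k / (g:ℝ)^k) + c0 / (g:ℝ)^j := by
            intro g
            have h1 : ∑ k ∈ range n, (t₁ k + (if k = j then c0 else 0)) / (g:ℝ)^k
                = (∑ k ∈ range n, t₁ k / (g:ℝ)^k)
                  + ∑ k ∈ range n, (if k = j then c0 else 0) / (g:ℝ)^k := by
              rw [← Finset.sum_add_distrib]
              apply Finset.sum_congr rfl
              intro k _
              rw [add_div]
            have h2 : ∑ k ∈ range n, (if k = j then c0 else 0) / (g:ℝ)^k = c0 / (g:ℝ)^j := by
              rw [Finset.sum_eq_single_of_mem j (Finset.mem_range.mpr hjn)]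
              · rw [if_pos rfl]
              · intro k _ hk
                rw [if_neg hk, zero_div]
            rw [h1, h2]
          apply ht₁.congr_left
          intro g
          rw [hpoly g]
          simp only [hf₁]
          ring

lemma EO_one {N : ℕ} (hN : 1 ≤ N) : EO N (fun i => if i = 0 then (1:ℝ) else 0) (fun _ => (1:ℝ)) := by
  unfold EO poly
  have h0 : (fun g : ℕ => (1:ℝ) - ∑ k ∈ range N, (if k = 0 then (1:ℝ) else 0) / (g:ℝ)^k)
      = fun _ => (0:ℝ) := by
    funext g
    have hsum : ∑ k ∈ range N, (if k = 0 then (1:ℝ) else 0) / (g:ℝ)^k = 1 := by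
      rw [Finset.sum_eq_single_of_mem 0 (Finset.mem_range.mpr (by omega))]
      · simp
      · intro k _ hk; simp [hk]
    rw [hsum]; ring
  rw [h0]
  exact isBigO_zero _ _

lemma isO_tendsto_zero {m : ℕ} (hm : 1 ≤ m) {f : ℕ → ℝ}
    (h : f =O[atTop] fun g : ℕ => 1/(g:ℝ)^m) : Tendsto f atTop (nhds 0) :=
  h.trans_tendsto (tendsto_const_div_pow 1 m hm)

end Stmt18

set_option maxHeartbeats 2000000 in
open Stmt18 Real in
theorem stmt_18 (s : ℕ) (hs : 2 ≤ s) (a : ℕ → ℝ) (c : ℕ → ℝ)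
    (hpos : ∀ j : ℕ, 1 ≤ j → 0 < c j)
    (hc : (fun j : ℕ => c j - (1 + ∑ i ∈ Finset.Icc 2 s, a i / (j : ℝ) ^ i))
        =O[atTop] (fun j : ℕ => 1 / (j : ℝ) ^ (s + 1))) :
    ∃ C₀ : ℝ, 0 < C₀ ∧
      Tendsto (fun g : ℕ => ∏ j ∈ Finset.Icc 1 g, c j) atTop (nhds C₀) ∧
      ∃ b : ℕ → ℝ,
        (fun g : ℕ => (∏ j ∈ Finset.Icc 1 g, c j) -
            C₀ * (1 + ∑ i ∈ Finset.Icc 1 (s - 1), b i / (g : ℝ) ^ i))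
          =O[atTop] (fun g : ℕ => 1 / (g : ℝ) ^ s) := by
  classical
  -- expansion of c
  set q0 : ℕ → ℝ := fun i => if i = 0 then 1 else if 2 ≤ i ∧ i ≤ s then a i else 0 with hq0def
  have hq0poly : ∀ g : ℕ, poly (s+1) q0 g = 1 + ∑ i ∈ Finset.Icc 2 s, a i / (g:ℝ)^i := by
    intro g
    unfold Stmt18.poly
    have hsub : insert 0 (Finset.Icc 2 s) ⊆ range (s+1) := by
      intro i hi
      simp only [Finset.mem_insert, Finset.mem_Icc] at hi
      rw [Finset.mem_range]
      omega
    rw [← Finset.sum_subset hsub]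
    · rw [Finset.sum_insert (by simp)]
      have h0 : q0 0 / (g:ℝ)^0 = 1 := by simp [hq0def]
      rw [h0]
      congr 1
      apply Finset.sum_congr rfl
      intro i hi
      have hi' := Finset.mem_Icc.mp hi
      simp only [hq0def]
      rw [if_neg (by omega), if_pos (by omega)]
    · intro i _ hi
      simp only [Finset.mem_insert, Finset.mem_Icc, not_or, not_and_or] at hi
      have : q0 i = 0 := by
        simp only [hq0def]
        rw [if_neg hi.1, if_neg (by omega)]
      rw [this, zero_div]
  have hEOc : EO (s+1) q0 c := by
    unfold EO
    apply hc.congr_left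
    intro g
    rw [hq0poly g]
  -- x = 1 - c
  set x : ℕ → ℝ := fun j => 1 - c j with hxdef
  set qx : ℕ → ℝ := fun i => (if i = 0 then (1:ℝ) else 0) - q0 i with hqxdef
  have hEOx : EO (s+1) qx x := EO_sub (EO_one (by omega)) hEOc
  have hlzqx : lowZero 2 qx := by
    intro i hi
    interval_cases i <;> simp [hqxdef, hq0def]
  have hxO2 : x =O[atTop] fun g : ℕ => 1/(g:ℝ)^2 := EO_extract hlzqx (by omega) hEOx
  have hx0 : Tendsto x atTop (nhds 0) := isO_tendsto_zero (by omega) hxO2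
  have hxhalf : ∀ᶠ g : ℕ in atTop, |x g| ≤ 1/2 := by
    have := hx0
    rw [NormedAddCommGroup.tendsto_nhds_zero] at this
    filter_upwards [this (1/2) (by norm_num)] with g hg
    rw [Real.norm_eq_abs] at hg
    exact hg.le
  -- log expansion
  set l : ℕ → ℝ := fun j => Real.log (c j) with hldef
  set F : ℕ → ℝ := fun g => -∑ m ∈ range (s+1), ((m:ℝ)+1)⁻¹ * x g^(m+1) with hFdef
  set el : ℕ → ℝ := fun i => -∑ m ∈ range (s+1), ((m:ℝ)+1)⁻¹ * powc qx (m+1) i with heldef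
  have hF : EO (s+1) el F := by
    apply EO_neg (EO_finsum ?_)
    intro m _
    exact EO_const_mul _ (EO_pow (by omega) hEOx (m+1))
  have herrlog : (fun g => l g - F g) =O[atTop] fun g : ℕ => 1/(g:ℝ)^(s+1) := by
    have hstep1 : (fun g => l g - F g) =O[atTop] fun g : ℕ => x g^(s+2) := by
      apply IsBigO.of_bound 2
      filter_upwards [hxhalf] with g hg
      have hx1 : |x g| < 1 := lt_of_le_of_lt hg (by norm_num)
      have hb := Real.abs_log_sub_add_sum_range_le hx1 (s+1)
      have hEq : l g - F g = (∑ i ∈ range (s+1), x g^(i+1)/((i:ℝ)+1)) + Real.log (1 - x g) := by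
        have hcg : 1 - x g = c g := by simp [hxdef]
        rw [hcg]
        simp only [hldef, hFdef]
        rw [sub_neg_eq_add, add_comm]
        congr 1
        apply Finset.sum_congr rfl
        intro i _
        rw [div_eq_mul_inv, mul_comm]
      have hbound : |l g - F g| ≤ |x g|^(s+2)/(1 - |x g|) := by
        rw [hEq]
        exact hb
      have h12 : (1:ℝ)/2 ≤ 1 - |x g| := by linarith
      have hfin : |x g|^(s+2)/(1 - |x g|) ≤ 2 * |x g|^(s+2) := by
        rw [div_le_iff₀ (by linarith [abs_nonneg (x g)] : (0:ℝ) < 1 - |x g|)]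
        nlinarith [pow_nonneg (abs_nonneg (x g)) (s+2)]
      rw [Real.norm_eq_abs, Real.norm_eq_abs, abs_pow]
      calc |l g - F g| ≤ |x g|^(s+2)/(1 - |x g|) := hbound
        _ ≤ 2 * |x g|^(s+2) := hfin
    have hstep2 : (fun g : ℕ => x g^(s+2)) =O[atTop] fun g : ℕ => 1/(g:ℝ)^(s+1) := by
      have h1 := hxO2.pow (s+2)
      have h2 : (fun g : ℕ => (1/(g:ℝ)^2)^(s+2)) = fun g : ℕ => 1/(g:ℝ)^(2*(s+2)) := by
        funext g
        rw [one_div_pow, ← pow_mul]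
      rw [h2] at h1
      exact h1.trans (base_isO (by omega))
    exact hstep1.trans hstep2
  have hEOl : EO (s+1) el l := EO_of_err hF herrlog
  have hlzel : lowZero 2 el := by
    intro i hi
    simp only [heldef]
    rw [neg_eq_zero]
    apply Finset.sum_eq_zero
    intro m _
    rw [lowZero_powc hlzqx (m+1) i (by omega), mul_zero]
  have hlO2 : l =O[atTop] fun g : ℕ => 1/(g:ℝ)^2 := EO_extract hlzel (by omega) hEOl
  have hsummable : Summable l := by
    have h2 : Summable (fun j : ℕ => 1/(j:ℝ)^2) :=
      Real.summable_one_div_nat_pow.mpr (by omega)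
    exact summable_of_isBigO_nat h2 hlO2
  have hsum1 : Summable (fun i : ℕ => l (1 + i)) := by
    apply Summable.congr ((summable_nat_add_iff 1).mpr hsummable)
    intro i
    rw [Nat.add_comm]
  set T : ℕ → ℝ := fun g => ∑' i : ℕ, l (1 + (i + g)) with hTdef
  set L : ℝ := ∑' i : ℕ, l (1 + i) with hLdef
  have hTg : ∀ g : ℕ, ∑ i ∈ range g, l (1+i) + T g = L := by
    intro g
    exact Summable.sum_add_tsum_nat_add g hsum1
  have hT0 : Tendsto T atTop (nhds 0) := by
    have hpartial : Tendsto (fun g : ℕ => ∑ i ∈ range g, l (1+i)) atTop (nhds L) :=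
      hsum1.hasSum.tendsto_sum_nat
    have hTeq : T = fun g => L - ∑ i ∈ range g, l (1+i) := by
      funext g
      have := hTg g
      linarith
    rw [hTeq]
    have h4 : Tendsto (fun g : ℕ => L - ∑ i ∈ range g, l (1+i)) atTop (nhds (L - L)) :=
      Tendsto.sub tendsto_const_nhds hpartial
    simpa using h4
  have hΔT : ∀ g : ℕ, T g - T (g+1) = l (1+g) := by
    intro g
    have hsg : Summable (fun i : ℕ => l (1 + (i + g))) := (summable_nat_add_iff g).mpr hsum1
    have hz := Summable.tsum_eq_zero_add hsg
    have hshift : ∑' i : ℕ, l (1 + ((i+1) + g)) = T (g+1) := by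
      apply tsum_congr
      intro i
      congr 1
      omega
    simp only [hTdef]
    rw [hz, hshift]
    simp only [Nat.zero_add]
    ring
  set eT : ℕ → ℝ := fun i => ∑ k ∈ range (s+1), el k * powc rseq k i with heTdef
  have hEOshift : EO (s+1) eT (fun g => l (g+1)) := EO_shift (by omega) hEOl
  have hEOΔ : EO (s+1) eT (fun g => T g - T (g+1)) := by
    unfold EO at hEOshift ⊢
    apply hEOshift.congr_left
    intro g
    have hlg : l (g+1) = T g - T (g+1) := by rw [hΔT g, Nat.add_comm]
    show l (g+1) - poly (s+1) eT g = (T g - T (g+1)) - poly (s+1) eT g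
    rw [hlg]
  have hlzT : lowZero 2 eT := shift_lowZero hlzel
  obtain ⟨t, hlzt, hEOT⟩ := solveC (n := s) (by omega) s 2 (by omega) (by omega) T eT hT0 hlzT hEOΔ
  set y : ℕ → ℝ := fun g => -T g with hydef
  have hEOy : EO s (fun i => -t i) y := EO_neg hEOT
  have hlzy : lowZero 1 (fun i => -t i) := by
    intro i hi
    show -t i = 0
    rw [hlzt i hi, neg_zero]
  have hyO1 : y =O[atTop] fun g : ℕ => 1/(g:ℝ)^1 := EO_extract hlzy (by omega) hEOy
  have hy0 : Tendsto y atTop (nhds 0) := isO_tendsto_zero (by omega) hyO1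
  have hyle1 : ∀ᶠ g : ℕ in atTop, |y g| ≤ 1 := by
    have := hy0
    rw [NormedAddCommGroup.tendsto_nhds_zero] at this
    filter_upwards [this 1 (by norm_num)] with g hg
    rw [Real.norm_eq_abs] at hg
    exact hg.le
  have hprod : ∀ g : ℕ, ∏ j ∈ Finset.Icc 1 g, c j = Real.exp (L - T g) := by
    intro g
    have h1 : ∏ j ∈ Finset.Icc 1 g, c j = ∏ j ∈ Finset.Icc 1 g, Real.exp (l j) :=
      Finset.prod_congr rfl fun j hj =>
        (Real.exp_log (hpos j (Finset.mem_Icc.mp hj).1)).symm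
    rw [h1, ← Real.exp_sum]
    congr 1
    have h2 : ∑ j ∈ Finset.Icc 1 g, l j = ∑ i ∈ range g, l (1+i) := by
      have : Finset.Icc 1 g = Finset.Ico 1 (g+1) := by
        rw [Finset.Ico_add_one_right_eq_Icc]
      rw [this, Finset.sum_Ico_eq_sum_range]
      simp
    rw [h2]
    have := hTg g
    linarith
  refine ⟨Real.exp L, Real.exp_pos L, ?_, ?_⟩
  · -- convergence
    have hfun : (fun g : ℕ => ∏ j ∈ Finset.Icc 1 g, c j) = fun g => Real.exp (L - T g) :=
      funext hprod
    rw [hfun]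
    have h3 : Tendsto (fun g : ℕ => L - T g) atTop (nhds L) := by
      have h4 : Tendsto (fun g : ℕ => L - T g) atTop (nhds (L - 0)) :=
        Tendsto.sub tendsto_const_nhds hT0
      simpa using h4
    exact (Real.continuous_exp.tendsto L).comp h3
  · -- expansion
    set E : ℕ → ℝ := fun g => Real.exp (y g) with hEdef
    set b' : ℕ → ℝ := fun i => ∑ m ∈ range s, ((m.factorial : ℝ))⁻¹ * powc (fun i => -t i) m i
      with hb'def
    have hG : EO s b' (fun g => ∑ m ∈ range s, ((m.factorial : ℝ))⁻¹ * y g^m) := by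
      apply EO_finsum
      intro m _
      exact EO_const_mul _ (EO_pow (by omega) hEOy m)
    have herrexp : (fun g => E g - ∑ m ∈ range s, ((m.factorial : ℝ))⁻¹ * y g^m) =O[atTop]
        fun g : ℕ => 1/(g:ℝ)^s := by
      have hstep1 : (fun g => E g - ∑ m ∈ range s, ((m.factorial : ℝ))⁻¹ * y g^m)
          =O[atTop] fun g : ℕ => y g^s := by
        apply IsBigO.of_bound ((s.succ : ℝ)/((s.factorial : ℝ) * (s:ℝ)))
        filter_upwards [hyle1] with g hg
        have hb := Real.exp_bound hg (by omega : 0 < s)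
        have hEq : E g - ∑ m ∈ range s, ((m.factorial : ℝ))⁻¹ * y g^m
            = Real.exp (y g) - ∑ m ∈ range s, y g^m/(m.factorial : ℝ) := by
          simp only [hEdef]
          congr 1
          apply Finset.sum_congr rfl
          intro m _
          rw [div_eq_mul_inv, mul_comm]
        rw [Real.norm_eq_abs, Real.norm_eq_abs, hEq, abs_pow]
        calc |Real.exp (y g) - ∑ m ∈ range s, y g^m/(m.factorial : ℝ)|
            ≤ |y g|^s * ((s.succ : ℝ)/((s.factorial : ℝ) * (s:ℝ))) := hb
          _ = ((s.succ : ℝ)/((s.factorial : ℝ) * (s:ℝ))) * |y g|^s := mul_comm _ _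
      have hstep2 : (fun g : ℕ => y g^s) =O[atTop] fun g : ℕ => 1/(g:ℝ)^s := by
        have h1 := hyO1.pow s
        have h2 : (fun g : ℕ => (1/(g:ℝ)^1)^s) = fun g : ℕ => 1/(g:ℝ)^s := by
          funext g
          rw [one_div_pow, ← pow_mul, one_mul]
        rwa [h2] at h1
      exact hstep1.trans hstep2
    have hEOE : EO s b' E := EO_of_err hG herrexp
    have hb'0 : b' 0 = 1 := by
      simp only [hb'def]
      rw [Finset.sum_eq_single_of_mem 0 (Finset.mem_range.mpr (by omega))]
      · simp [powc, Nat.factorial]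
      · intro m _ hm0
        rw [lowZero_powc hlzy m 0 (by omega), mul_zero]
    refine ⟨b', ?_⟩
    have hpoly : ∀ g : ℕ, 1 + ∑ i ∈ Finset.Icc 1 (s-1), b' i/(g:ℝ)^i = poly s b' g := by
      intro g
      unfold Stmt18.poly
      rw [range_eq_Ico, Finset.sum_eq_sum_Ico_succ_bot (by omega : 0 < s)]
      rw [hb'0]
      have hIcc : Finset.Icc 1 (s-1) = Finset.Ico 1 s := by
        ext i
        simp only [Finset.mem_Icc, Finset.mem_Ico]
        omega
      rw [hIcc]
      simp
    have hfinal : ∀ g : ℕ, (∏ j ∈ Finset.Icc 1 g, c j)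
        - Real.exp L * (1 + ∑ i ∈ Finset.Icc 1 (s-1), b' i/(g:ℝ)^i)
        = Real.exp L * (E g - poly s b' g) := by
      intro g
      rw [hprod g, hpoly g]
      have hsplit : Real.exp (L - T g) = Real.exp L * E g := by
        simp only [hEdef, hydef]
        rw [← Real.exp_add, sub_eq_add_neg]
      rw [hsplit]
      ring
    unfold EO at hEOE
    have hO := hEOE.const_mul_left (Real.exp L)
    apply hO.congr_left
    intro g
    exact (hfinal g).symm
end
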